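/- arXiv:2003.12345 — 9 statements merged into one kernel-verified Lean document; each statement's English description precedes it below -/
import Mathlib

section
/- Let X be a nonempty finite set and let ≤₁ and ≤₂ be two quasi-orders (reflexive, transitive relations) on X such that every pair of distinct elements of X is comparable with respect to ≤₁ or with respect to ≤₂. Then there exists x ∈ X such that for every y ∈ X, x ≤₁ y or x ≤₂ y. -/
private lemma biRank_step {X : Type*} {le1 le2 : X → X → Prop}
    (h1trans : ∀ x y z, le1 x y → le1 y z → le1 x z)
    (h2trans : ∀ x y z, le2 x y → le2 y z → le2 x z)
    {x y z : X} (hxy : le1 x y) (hyz : le1 y z ∨ le2 y z) (hzx : le1 z x ∨ le2 z x)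
    (hzy1 : ¬ le1 z y) (hyx2 : ¬ le2 y x) : le1 y z := by
  rcases hyz with h | h
  · exact h
  · rcases hzx with h' | h'
    · exact absurd (h1trans z x y h' hxy) hzy1
    · exact absurd (h2trans y z x h h') hyx2

private lemma biRank_cycle {X : Type*} {le1 le2 : X → X → Prop}
    (h1refl : ∀ x, le1 x x)
    (h1trans : ∀ x y z, le1 x y → le1 y z → le1 x z)
    (h2trans : ∀ x y z, le2 x y → le2 y z → le2 x z)
    {s : Finset X} {F : X → X}
    (hmem : ∀ a ∈ s, F a ∈ s)
    (hgood : ∀ a ∈ s, ∀ y ∈ s, y ≠ a → le1 (F a) y ∨ le2 (F a) y)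
    (hbad1 : ∀ a ∈ s, ¬ le1 (F a) a) (hbad2 : ∀ a ∈ s, ¬ le2 (F a) a)
    (hne : ∀ a ∈ s, F a ≠ a) (h2cyc : ∀ a ∈ s, F (F a) ≠ a)
    {a₀ : X} (ha₀ : a₀ ∈ s) (hstart : le1 a₀ (F a₀))
    {m : ℕ} (hm : 1 ≤ m) (hcyc : F^[m] a₀ = a₀) : False := by
  have hmi : ∀ k, F^[k] a₀ ∈ s := by
    intro k; induction k with
    | zero => exact ha₀
    | succ n ih => rw [Function.iterate_succ_apply']; exact hmem _ ih
  have hstep : ∀ k, le1 (F^[k] a₀) (F^[k+1] a₀) := by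
    intro k
    induction k with
    | zero => simpa using hstart
    | succ n ih =>
      have hxs : F^[n] a₀ ∈ s := hmi n
      set x := F^[n] a₀ with hx
      have hy : F^[n+1] a₀ = F x := Function.iterate_succ_apply' F n a₀
      have hz : F^[n+2] a₀ = F (F x) := by
        rw [Function.iterate_succ_apply' F (n+1) a₀, hy]
      rw [hy, hz]
      rw [hy] at ih
      refine biRank_step h1trans h2trans ih ?_ ?_ ?_ ?_
      · exact hgood x hxs _ (hmem _ (hmem _ hxs)) (h2cyc x hxs)
      · exact hgood (F x) (hmem _ hxs) x hxs (fun h => (hne x hxs) h.symm)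
      · exact hbad1 (F x) (hmem _ hxs)
      · exact hbad2 x hxs
  have hchain : ∀ k, 1 ≤ k → le1 (F a₀) (F^[k] a₀) := by
    intro k hk
    induction k with
    | zero => omega
    | succ n ih =>
      rcases Nat.eq_zero_or_pos n with h | h
      · subst h; simpa using h1refl (F a₀)
      · have h1 := ih h
        have h2 := hstep n
        exact h1trans _ _ _ h1 h2
  have := hchain m hm
  rw [hcyc] at this
  exact hbad1 a₀ ha₀ this

/-- Bi-ranking Lemma: if `X` is a nonempty finite set with two quasi-orders such that
every pair of distinct elements is comparable in one of them, then some element is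
below every other element in one of the two quasi-orders. -/
theorem stmt_0 {X : Type*} [Fintype X] [Nonempty X] (le1 le2 : X → X → Prop)
    (h1refl : ∀ x, le1 x x) (h1trans : ∀ x y z, le1 x y → le1 y z → le1 x z)
    (h2refl : ∀ x, le2 x x) (h2trans : ∀ x y z, le2 x y → le2 y z → le2 x z)
    (hcomp : ∀ x y : X, x ≠ y → (le1 x y ∨ le1 y x) ∨ (le2 x y ∨ le2 y x)) :
    ∃ x : X, ∀ y : X, le1 x y ∨ le2 x y := by
  classical
  suffices h : ∀ s : Finset X, s.Nonempty → ∃ x ∈ s, ∀ y ∈ s, le1 x y ∨ le2 x y by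
    obtain ⟨x, -, hx⟩ := h Finset.univ ⟨Classical.arbitrary X, Finset.mem_univ _⟩
    exact ⟨x, fun y => hx y (Finset.mem_univ y)⟩
  intro s
  induction s using Finset.strongInduction with
  | _ s IH =>
    intro hs
    by_contra hno
    push_neg at hno
    -- For each a ∈ s, the minimum of s.erase a is good everywhere except at a.
    have H : ∀ a ∈ s, ∃ x, x ∈ s ∧ x ≠ a ∧
        (∀ y ∈ s, y ≠ a → le1 x y ∨ le2 x y) ∧ ¬ le1 x a ∧ ¬ le2 x a := by
      intro a ha
      have hne' : (s.erase a).Nonempty := by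
        by_contra h
        rw [Finset.not_nonempty_iff_eq_empty] at h
        obtain ⟨y, hy, hb1, hb2⟩ := hno a ha
        have hya : y = a := by
          by_contra hya
          have : y ∈ s.erase a := Finset.mem_erase.2 ⟨hya, hy⟩
          simp [h] at this
        subst hya
        exact hb1 (h1refl y)
      obtain ⟨x, hxmem, hx⟩ := IH (s.erase a) (Finset.erase_ssubset ha) hne'
      have hxs : x ∈ s := Finset.mem_of_mem_erase hxmem
      have hxa : x ≠ a := Finset.ne_of_mem_erase hxmem
      obtain ⟨y, hy, hb1, hb2⟩ := hno x hxs
      have hya : y = a := by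
        by_contra hya
        rcases hx y (Finset.mem_erase.2 ⟨hya, hy⟩) with h | h
        exacts [hb1 h, hb2 h]
      subst hya
      exact ⟨x, hxs, hxa, fun z hz hza => hx z (Finset.mem_erase.2 ⟨hza, hz⟩), hb1, hb2⟩
    choose! F hFmem hFne hFgood hFbad1 hFbad2 using H
    -- F is injective on s
    have hinj : ∀ u ∈ s, ∀ v ∈ s, F u = F v → u = v := by
      intro u hu v hv h
      by_contra hne'
      have h1 := hFgood u hu v hv (fun hh => hne' hh.symm)
      rw [h] at h1
      rcases h1 with h1 | h1
      exacts [hFbad1 v hv h1, hFbad2 v hv h1]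
    have hup : ∀ a ∈ s, le1 a (F a) ∨ le2 a (F a) := by
      intro a ha
      rcases hcomp a (F a) (fun h => hFne a ha h.symm) with (h | h) | (h | h)
      · exact Or.inl h
      · exact absurd h (hFbad1 a ha)
      · exact Or.inr h
      · exact absurd h (hFbad2 a ha)
    have h2cyc : ∀ a ∈ s, F (F a) ≠ a := by
      intro a ha h
      rcases hup (F a) (hFmem a ha) with hh | hh <;> rw [h] at hh
      exacts [hFbad1 a ha hh, hFbad2 a ha hh]
    obtain ⟨a₀, ha₀⟩ := hs
    have hmi : ∀ k, F^[k] a₀ ∈ s := by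
      intro k; induction k with
      | zero => exact ha₀
      | succ n ih => rw [Function.iterate_succ_apply']; exact hFmem _ ih
    have hcancel : ∀ i : ℕ, ∀ u v : X, u ∈ s → v ∈ s → F^[i] u = F^[i] v → u = v := by
      intro i
      induction i with
      | zero => intro u v _ _ h; simpa using h
      | succ n ih =>
        intro u v hu hv h
        rw [Function.iterate_succ_apply, Function.iterate_succ_apply] at h
        exact hinj u hu v hv (ih (F u) (F v) (hFmem u hu) (hFmem v hv) h)
    -- get a cycle
    obtain ⟨i, j, hij, he⟩ :=
      Finite.exists_ne_map_eq_of_infinite (fun k : ℕ => F^[k] a₀)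
    have key : ∀ i j : ℕ, i < j → F^[i] a₀ = F^[j] a₀ →
        ∃ m : ℕ, 1 ≤ m ∧ F^[m] a₀ = a₀ := by
      intro i j hlt he
      refine ⟨j - i, by omega, ?_⟩
      have h1 : F^[i] (F^[j - i] a₀) = F^[i] a₀ := by
        rw [← Function.iterate_add_apply, show i + (j - i) = j by omega]
        exact he.symm
      exact hcancel i _ _ (hmi (j - i)) ha₀ h1
    have hcycle : ∃ m : ℕ, 1 ≤ m ∧ F^[m] a₀ = a₀ := by
      rcases hij.lt_or_gt with h | h
      · exact key i j h he
      · exact key j i h he.symm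
    obtain ⟨m, hm, hcyc⟩ := hcycle
    rcases hup a₀ ha₀ with h | h
    · exact biRank_cycle h1refl h1trans h2trans hFmem hFgood hFbad1 hFbad2 hFne
        h2cyc ha₀ h hm hcyc
    · exact biRank_cycle h2refl h2trans h1trans hFmem
        (fun a ha y hy hya => (hFgood a ha y hy hya).symm) hFbad2 hFbad1 hFne
        h2cyc ha₀ h hm hcyc
end

section
/- Let G be a P₅-free graph, S a minimal separator in G, and A, B two full components of S. Then for every a ∈ A and b ∈ B, S ⊆ N(a) ∪ N(b). -/
open SimpleGraph Set

variable {V : Type*}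

/-- Open neighborhood of a set: vertices outside `A` with a neighbor in `A`. -/
def nbhdSet (G : SimpleGraph V) (A : Set V) : Set V :=
  {v | v ∉ A ∧ ∃ u ∈ A, G.Adj u v}

/-- Union of closed neighborhoods of vertices of `X`. -/
def closedNbhd (G : SimpleGraph V) (X : Set V) : Set V :=
  X ∪ {v | ∃ u ∈ X, G.Adj u v}

/-- `A` is a connected component of `G - S`. -/
def IsCompOutside (G : SimpleGraph V) (S A : Set V) : Prop :=
  A.Nonempty ∧ Disjoint A S ∧ (G.induce A).Connected ∧
    ∀ u ∈ A, ∀ v, v ∉ A → v ∉ S → ¬ G.Adj u v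

/-- `A` is a full component of `G - S`, i.e. `N(A) = S`. -/
def IsFullComp (G : SimpleGraph V) (S A : Set V) : Prop :=
  IsCompOutside G S A ∧ nbhdSet G A = S

/-- `S` is a minimal separator: it has at least two full components. -/
def IsMinSep (G : SimpleGraph V) (S : Set V) : Prop :=
  ∃ A B : Set V, A ≠ B ∧ IsFullComp G S A ∧ IsFullComp G S B

/-- `f` is an induced copy of the path on `k` vertices in `G`. -/
def IsInducedPathMap (G : SimpleGraph V) {k : ℕ} (f : Fin k ↪ V) : Prop :=
  ∀ i j : Fin k, G.Adj (f i) (f j) ↔ ((i : ℕ) + 1 = (j : ℕ) ∨ (j : ℕ) + 1 = (i : ℕ))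

/-- `G` is `P_t`-free: no induced path on `t` vertices. -/
def PFree (t : ℕ) (G : SimpleGraph V) : Prop :=
  ¬ ∃ f : Fin t ↪ V, IsInducedPathMap G f

/-- `Ω` is a potential maximal clique. -/
def IsPMC (G : SimpleGraph V) (Ω : Set V) : Prop :=
  (∀ D : Set V, IsCompOutside G Ω D → nbhdSet G D ≠ Ω) ∧
  (∀ u ∈ Ω, ∀ v ∈ Ω, u ≠ v → ¬ G.Adj u v →
    ∃ D : Set V, IsCompOutside G Ω D ∧ u ∈ nbhdSet G D ∧ v ∈ nbhdSet G D)

lemma find_pair {G : SimpleGraph V} {A : Set V} {s : V} {z : A}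
    (hz : G.Adj (z : V) s) :
    ∀ {u : A}, (G.induce A).Walk u z → ¬ G.Adj (u : V) s →
      ∃ x ∈ A, ∃ y ∈ A, G.Adj x y ∧ G.Adj y s ∧ ¬ G.Adj x s := by
  intro u w
  induction w with
  | nil => exact fun hu => absurd hz hu
  | @cons p q r e w ih =>
    intro hu
    by_cases hq : G.Adj (q : V) s
    · exact ⟨p, p.2, q, q.2, e, hq, hu⟩
    · exact ih hz hq

lemma walk_in_B {G : SimpleGraph V} {S A B : Set V}
    (hAS : Disjoint A S) (hB : IsCompOutside G S B) :
    ∀ {p q : A}, (G.induce A).Walk p q → (p : V) ∈ B → (q : V) ∈ B := by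
  intro p q w
  induction w with
  | nil => exact id
  | @cons p q r e w ih =>
    intro hp
    apply ih
    by_contra hq
    exact hB.2.2.2 p hp q hq (fun hqS => hAS.ne_of_mem q.2 hqS rfl) e

lemma comps_disjoint {G : SimpleGraph V} {S A B : Set V}
    (hAB : A ≠ B) (hA : IsCompOutside G S A) (hB : IsCompOutside G S B) :
    Disjoint A B := by
  rw [Set.disjoint_left]
  intro v hvA hvB
  apply hAB
  have hsub : ∀ {X Y : Set V}, IsCompOutside G S X → IsCompOutside G S Y →
      v ∈ X → v ∈ Y → X ⊆ Y := by
    intro X Y hX hY hvX hvY u hu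
    obtain ⟨w⟩ := hX.2.2.1.preconnected ⟨v, hvX⟩ ⟨u, hu⟩
    exact walk_in_B hX.2.1 hY w hvY
  exact Set.Subset.antisymm (hsub hA hB hvA hvB) (hsub hB hA hvB hvA)

/-- In a `P₅`-free graph, for a minimal separator `S` with full components `A, B`,
every `a ∈ A` and `b ∈ B` dominate `S`. -/
theorem stmt_1 [Fintype V] (G : SimpleGraph V) (h5 : PFree 5 G) (S A B : Set V)
    (hAB : A ≠ B) (hA : IsFullComp G S A) (hB : IsFullComp G S B) :
    ∀ a ∈ A, ∀ b ∈ B, S ⊆ G.neighborSet a ∪ G.neighborSet b := by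
  intro a ha b hb s hs
  by_contra hcon
  simp only [Set.mem_union, mem_neighborSet, not_or] at hcon
  obtain ⟨has, hbs⟩ := hcon
  have hDisj := comps_disjoint hAB hA.1 hB.1
  -- s has neighbors in A and B
  have hsA : s ∈ nbhdSet G A := hA.2 ▸ hs
  have hsB : s ∈ nbhdSet G B := hB.2 ▸ hs
  obtain ⟨-, zA, hzA, hzAs⟩ := hsA
  obtain ⟨-, zB, hzB, hzBs⟩ := hsB
  -- find x1 y1 in A
  obtain ⟨w1⟩ := hA.1.2.2.1.preconnected ⟨a, ha⟩ (⟨zA, hzA⟩ : A)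
  obtain ⟨x1, hx1, y1, hy1, hxy1, hy1s, hx1s⟩ :=
    find_pair (z := ⟨zA, hzA⟩) hzAs w1 has
  obtain ⟨w2⟩ := hB.1.2.2.1.preconnected ⟨b, hb⟩ (⟨zB, hzB⟩ : B)
  obtain ⟨x2, hx2, y2, hy2, hxy2, hy2s, hx2s⟩ :=
    find_pair (z := ⟨zB, hzB⟩) hzBs w2 hbs
  -- facts
  have hAS := hA.1.2.1
  have hBS := hB.1.2.1
  have hx1S : x1 ∉ S := fun h => hAS.ne_of_mem hx1 h rfl
  have hy1S : y1 ∉ S := fun h => hAS.ne_of_mem hy1 h rfl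
  have hx2S : x2 ∉ S := fun h => hBS.ne_of_mem hx2 h rfl
  have hy2S : y2 ∉ S := fun h => hBS.ne_of_mem hy2 h rfl
  have hx2A : x2 ∉ A := fun h => hDisj.ne_of_mem h hx2 rfl
  have hy2A : y2 ∉ A := fun h => hDisj.ne_of_mem h hy2 rfl
  -- no edges between A and B
  have nAB : ∀ u ∈ A, ∀ v ∈ B, ¬ G.Adj u v := fun u hu v hv =>
    hA.1.2.2.2 u hu v (fun h => hDisj.ne_of_mem h hv rfl)
      (fun h => hBS.ne_of_mem hv h rfl)
  have n14 : ¬ G.Adj x1 y2 := nAB x1 hx1 y2 hy2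
  have n15 : ¬ G.Adj x1 x2 := nAB x1 hx1 x2 hx2
  have n24 : ¬ G.Adj y1 y2 := nAB y1 hy1 y2 hy2
  have n25 : ¬ G.Adj y1 x2 := nAB y1 hy1 x2 hx2
  -- distinctness
  have d12 : x1 ≠ y1 := hxy1.ne
  have d45 : y2 ≠ x2 := hxy2.ne.symm
  have d13 : x1 ≠ s := fun h => hx1S (h ▸ hs)
  have d23 : y1 ≠ s := fun h => hy1S (h ▸ hs)
  have d34 : s ≠ y2 := fun h => hy2S (h ▸ hs)
  have d35 : s ≠ x2 := fun h => hx2S (h ▸ hs)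
  have d14 : x1 ≠ y2 := fun h => hy2A (h ▸ hx1)
  have d15 : x1 ≠ x2 := fun h => hx2A (h ▸ hx1)
  have d24 : y1 ≠ y2 := fun h => hy2A (h ▸ hy1)
  have d25 : y1 ≠ x2 := fun h => hx2A (h ▸ hy1)
  apply h5
  let g : Fin 5 → V := ![x1, y1, s, y2, x2]
  have hinj : Function.Injective g := by
    intro i j hij
    fin_cases i <;> fin_cases j <;>
      simp_all [g, d12, d13, d14, d15, d23, d24, d25, d34, d35, d45,
        d12.symm, d13.symm, d14.symm, d15.symm, d23.symm, d24.symm, d25.symm,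
        d34.symm, d35.symm, d45.symm]
  refine ⟨⟨g, hinj⟩, ?_⟩
  intro i j
  have sy2 : G.Adj s y2 := hy2s.symm
  have m31 : ¬ G.Adj s x1 := fun h => hx1s h.symm
  have m41 : ¬ G.Adj y2 x1 := fun h => n14 h.symm
  have m51 : ¬ G.Adj x2 x1 := fun h => n15 h.symm
  have m42 : ¬ G.Adj y2 y1 := fun h => n24 h.symm
  have m52 : ¬ G.Adj x2 y1 := fun h => n25 h.symm
  have m35 : ¬ G.Adj s x2 := fun h => hx2s h.symm
  fin_cases i <;> fin_cases j <;>
    simp [g, hxy1, hy1s, sy2, hxy2.symm, hx1s, n14, n15, n24, n25,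
      hxy1.symm, hy1s.symm, sy2.symm, hxy2, m31, m41, m51, m42, m52, m35, hx2s]
end

section
/- For every n ≥ 1 there exists a P₈-free graph G containing a minimal separator S with |S| = n such that for every set X ⊆ V(G) with S ⊆ N[X] one has |X| ≥ n. Concretely, take V(G) = A₁ ∪ A₂ ∪ S where A₁ = {a₁ʲ}, A₂ = {a₂ʲ}, S = {sʲ} for 1 ≤ j ≤ n, make A₁ and A₂ cliques, S an independent set, and add edges sʲa₁ʲ and sʲa₂ʲ for each j. -/
open SimpleGraph Set

variable {V : Type*}

/-- Vertex set: `A₁ ⊕ A₂ ⊕ S`, each a copy of `Fin n`. -/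
abbrev ExV (n : ℕ) := Fin n ⊕ Fin n ⊕ Fin n

/-- Adjacency: `A₁` and `A₂` are cliques, `S` is independent, and `sʲ` is adjacent
exactly to `a₁ʲ` and `a₂ʲ`. -/
def exAdj (n : ℕ) : ExV n → ExV n → Prop
  | Sum.inl i, Sum.inl j => i ≠ j
  | Sum.inr (Sum.inl i), Sum.inr (Sum.inl j) => i ≠ j
  | Sum.inl i, Sum.inr (Sum.inr j) => i = j
  | Sum.inr (Sum.inr i), Sum.inl j => i = j
  | Sum.inr (Sum.inl i), Sum.inr (Sum.inr j) => i = j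
  | Sum.inr (Sum.inr i), Sum.inr (Sum.inl j) => i = j
  | _, _ => False

def exGraph (n : ℕ) : SimpleGraph (ExV n) where
  Adj := exAdj n
  symm := by
    constructor
    rintro (i | i | i) (j | j | j) h <;> simp only [exAdj] at h ⊢ <;> omega
  loopless := by
    constructor
    rintro (i | i | i) h <;> simp only [exAdj] at h <;> omega

def ExA1 (n : ℕ) : Set (ExV n) := Set.range Sum.inl
def ExA2 (n : ℕ) : Set (ExV n) := Set.range (fun j => Sum.inr (Sum.inl j))
def ExS (n : ℕ) : Set (ExV n) := Set.range (fun j => Sum.inr (Sum.inr j))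

/-!
An induced path meets a clique in at most two vertices, which are consecutive on the path, and
has no two consecutive vertices in an independent set. Covering `P₈` by two cliques and an
independent set this way is impossible: each of the blocks `{2m, 2m + 1}` has a vertex outside
the independent set, and comparing the positions of these four vertices forces the cliques to
occupy positions `{1, 2}` and `{5, 6}`, leaving the consecutive positions `3, 4` to the
independent set. In `exGraph n` the cliques are `A₁`, `A₂` and the independent set is `S`.

`A₁` and `A₂` are cliques whose neighbourhood is exactly `S`, hence full components of `G - S`.
Every closed neighbourhood containing `sʲ` is that of `a₁ʲ`, `a₂ʲ` or `sʲ`, so a set `X` with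
`S ⊆ N[X]` contains a vertex of index `j` for every `j`.
-/

section InducedPath

variable {G : SimpleGraph V} {k : ℕ} {f : Fin k ↪ V}

lemma IsInducedPathMap.val_le_succ_of_mem_clique (hf : IsInducedPathMap G f) {C : Set V}
    (hC : G.IsClique C) {i j : Fin k} (hi : f i ∈ C) (hj : f j ∈ C) : (i : ℕ) ≤ j + 1 := by
  rcases eq_or_ne i j with rfl | hij
  · omega
  · have := (hf i j).1 (hC hi hj (f.injective.ne hij))
    omega

lemma IsInducedPathMap.notMem_of_succ (hf : IsInducedPathMap G f) {I : Set V}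
    (hI : G.IsIndepSet I) {i j : Fin k} (hij : (i : ℕ) + 1 = j) (hi : f i ∈ I) : f j ∉ I :=
  fun hj => hI hi hj (f.injective.ne (by rintro rfl; omega)) ((hf i j).2 (Or.inl hij))

end InducedPath

theorem pFree_eight_of_cover_cliques_indepSet {G : SimpleGraph V} {C₁ C₂ I : Set V}
    (hcover : ∀ v, v ∈ C₁ ∨ v ∈ C₂ ∨ v ∈ I) (hC₁ : G.IsClique C₁) (hC₂ : G.IsClique C₂)
    (hI : G.IsIndepSet I) : PFree 8 G := by
  rintro ⟨f, hf⟩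
  have hblock : ∀ m < 4, ∃ x : Fin 8, (x : ℕ) / 2 = m ∧ f x ∉ I := by
    intro m hm
    by_contra! h
    exact hf.notMem_of_succ hI (i := ⟨2 * m, by omega⟩) (j := ⟨2 * m + 1, by omega⟩) rfl
      (h _ (by simp)) (h _ (by simp; omega))
  obtain ⟨x₀, hx₀, hx₀I⟩ := hblock 0 (by norm_num)
  obtain ⟨x₁, hx₁, hx₁I⟩ := hblock 1 (by norm_num)
  obtain ⟨x₂, hx₂, hx₂I⟩ := hblock 2 (by norm_num)
  obtain ⟨x₃, hx₃, hx₃I⟩ := hblock 3 (by norm_num)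
  have hmem : ∀ x, f x ∉ I → f x ∈ C₁ ∨ f x ∈ C₂ := fun x hx => by
    rcases hcover (f x) with h | h | h <;> tauto
  wlog h₀ : f x₀ ∈ C₁ generalizing C₁ C₂
  · exact this (fun v => by rcases hcover v with h | h | h <;> tauto) hC₂ hC₁
      (fun x hx => (hmem x hx).symm) ((hmem x₀ hx₀I).resolve_left h₀)
  have near₁ : ∀ {i j}, f i ∈ C₁ → f j ∈ C₁ → (i : ℕ) ≤ j + 1 :=
    hf.val_le_succ_of_mem_clique hC₁
  have near₂ : ∀ {i j}, f i ∈ C₂ → f j ∈ C₂ → (i : ℕ) ≤ j + 1 :=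
    hf.val_le_succ_of_mem_clique hC₂
  have h₂ : f x₂ ∈ C₂ := (hmem x₂ hx₂I).resolve_left fun h => by have := near₁ h h₀; omega
  have h₃ : f x₃ ∈ C₂ := (hmem x₃ hx₃I).resolve_left fun h => by have := near₁ h h₀; omega
  have h₁ : f x₁ ∈ C₁ := (hmem x₁ hx₁I).resolve_right fun h => by have := near₂ h₃ h; omega
  -- hence `x₀ = 1`, `x₁ = 2`, `x₂ = 5` and `x₃ = 6`
  have hx₁₀ := near₁ h₁ h₀
  have hx₃₂ := near₂ h₃ h₂
  have h3 : f 3 ∈ I := by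
    rcases hcover (f 3) with h | h | h
    · have := near₁ h h₀; omega
    · have := near₂ h₂ h; omega
    · exact h
  have h4 : f 4 ∈ I := by
    rcases hcover (f 4) with h | h | h
    · have := near₁ h h₁; omega
    · have := near₂ h₃ h; omega
    · exact h
  exact hf.notMem_of_succ hI (i := 3) (j := 4) rfl h3 h4

lemma isFullComp_of_isClique {G : SimpleGraph V} {S A : Set V} (hA : A.Nonempty)
    (hAS : Disjoint A S) (hclique : G.IsClique A) (hN : nbhdSet G A = S) : IsFullComp G S A := by
  refine ⟨⟨hA, hAS, ?_, fun u hu v hvA hvS huv => hvS (hN ▸ ⟨hvA, u, hu, huv⟩)⟩, hN⟩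
  have : Nonempty A := hA.to_subtype
  rw [induce_eq_top.2 hclique]
  exact connected_top

section ExGraph

variable {n : ℕ}

lemma exGraph_isClique_exA1 : (exGraph n).IsClique (ExA1 n) := by
  rintro _ ⟨i, rfl⟩ _ ⟨j, rfl⟩ h
  simpa [exGraph, exAdj] using h

lemma exGraph_isClique_exA2 : (exGraph n).IsClique (ExA2 n) := by
  rintro _ ⟨i, rfl⟩ _ ⟨j, rfl⟩ h
  simpa [exGraph, exAdj] using h

lemma exGraph_isIndepSet_exS : (exGraph n).IsIndepSet (ExS n) := by
  rintro _ ⟨i, rfl⟩ _ ⟨j, rfl⟩ -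
  simp [exGraph, exAdj]

lemma exA1_or_exA2_or_exS (v : ExV n) : v ∈ ExA1 n ∨ v ∈ ExA2 n ∨ v ∈ ExS n := by
  rcases v with i | i | i <;> simp [ExA1, ExA2, ExS]

lemma nbhdSet_exA1 : nbhdSet (exGraph n) (ExA1 n) = ExS n := by
  ext (i | i | i) <;> simp [nbhdSet, exGraph, exAdj, ExA1, ExS]

lemma nbhdSet_exA2 : nbhdSet (exGraph n) (ExA2 n) = ExS n := by
  ext (i | i | i) <;> simp [nbhdSet, exGraph, exAdj, ExA2, ExS]

lemma isMinSep_exS (hn : 0 < n) : IsMinSep (exGraph n) (ExS n) := by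
  have hdisj₁ : Disjoint (ExA1 n) (ExS n) := by simp [Set.disjoint_left, ExA1, ExS]
  have hdisj₂ : Disjoint (ExA2 n) (ExS n) := by simp [Set.disjoint_left, ExA2, ExS]
  refine ⟨ExA1 n, ExA2 n, fun h => ?_,
    isFullComp_of_isClique ⟨_, ⟨⟨0, hn⟩, rfl⟩⟩ hdisj₁ exGraph_isClique_exA1 nbhdSet_exA1,
    isFullComp_of_isClique ⟨_, ⟨⟨0, hn⟩, rfl⟩⟩ hdisj₂ exGraph_isClique_exA2 nbhdSet_exA2⟩
  have : Sum.inl ⟨0, hn⟩ ∈ ExA2 n := h ▸ ⟨_, rfl⟩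
  simp [ExA2] at this

lemma ncard_exS : (ExS n).ncard = n := by
  rw [ExS, Set.ncard_range_of_injective fun _ _ h => by simpa using h]
  simp

def exIndex : ExV n → Fin n := Sum.elim id (Sum.elim id id)

lemma exists_mem_exIndex_eq {X : Set (ExV n)} (hX : ExS n ⊆ closedNbhd (exGraph n) X)
    (j : Fin n) : ∃ u ∈ X, exIndex u = j := by
  rcases hX ⟨j, rfl⟩ with hj | ⟨u, hu, hadj⟩
  · exact ⟨_, hj, rfl⟩
  · refine ⟨u, hu, ?_⟩
    rcases u with i | i | i <;> simp_all [exGraph, exAdj, exIndex]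

lemma le_card_of_exS_subset_closedNbhd (X : Finset (ExV n))
    (hX : ExS n ⊆ closedNbhd (exGraph n) X) : n ≤ X.card := by
  simpa using Finset.card_le_card_of_surjOn exIndex
    (t := Finset.univ) fun j _ => exists_mem_exIndex_eq hX j

end ExGraph

/-- The concrete graph `exGraph n` is `P₈`-free, `S` is a minimal separator of size `n`,
and any set `X` with `S ⊆ N[X]` has at least `n` vertices. -/
theorem stmt_5 (n : ℕ) (hn : 1 ≤ n) :
    PFree 8 (exGraph n) ∧ IsMinSep (exGraph n) (ExS n) ∧ (ExS n).ncard = n ∧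
      ∀ X : Finset (ExV n), ExS n ⊆ closedNbhd (exGraph n) ↑X → n ≤ X.card :=
  ⟨pFree_eight_of_cover_cliques_indepSet exA1_or_exA2_or_exS exGraph_isClique_exA1
    exGraph_isClique_exA2 exGraph_isIndepSet_exS, isMinSep_exS hn, ncard_exS,
    le_card_of_exS_subset_closedNbhd⟩
end

section
/- Let G be a graph, let Ω be a potential maximal clique of G, and let D be a connected component of G−Ω. Then N(D) is a minimal separator of G. -/
open SimpleGraph Set

variable {V : Type*}

/-!
`S = N(D)` lies in `Ω`, and properly so by the first PMC axiom; pick `x ∈ Ω \ S`. Then `D` and the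
component `C` of `G - S` through `x` are two different full components of `G - S`. For `C`: a
vertex `s ∈ S` not adjacent to `x` shares with `x` the neighbourhood of some component `D'` of
`G - Ω` (second PMC axiom); `D'` is connected, avoids `S` and is adjacent to `x`, so `D' ⊆ C`
and `s ∈ N(C)`.
-/

section Components

variable {G : SimpleGraph V} {S A : Set V} {x : V}

lemma IsCompOutside.nbhdSet_subset (hA : IsCompOutside G S A) : nbhdSet G A ⊆ S := by
  rintro v ⟨hvA, u, huA, huv⟩
  by_contra hvS
  exact hA.2.2.2 u huA v hvA hvS huv

lemma IsCompOutside.mem_of_adj (hA : IsCompOutside G S A) {u v : V} (hu : u ∈ A) (hv : v ∉ S)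
    (huv : G.Adj u v) : v ∈ A := by
  by_contra hvA
  exact hA.2.2.2 u hu v hvA hv huv

lemma isFullComp_nbhdSet (hA : (G.induce A).Connected) : IsFullComp G (nbhdSet G A) A := by
  obtain ⟨⟨a, ha⟩⟩ := hA.nonempty
  refine ⟨⟨⟨a, ha⟩, ?_, hA, fun u hu v hvA hvN huv => hvN ⟨hvA, u, hu, huv⟩⟩, rfl⟩
  exact Set.disjoint_left.2 fun v hvA hvN => hvN.1 hvA

/-- The component of `G - S` through `x`; empty when `x ∈ S`. -/
def compContaining (G : SimpleGraph V) (S : Set V) (x : V) : Set V :=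
  ⋃₀ {A | x ∈ A ∧ Disjoint A S ∧ (G.induce A).Connected}

lemma mem_compContaining_self (hx : x ∉ S) : x ∈ compContaining G S x := by
  refine ⟨{x}, ⟨rfl, Set.disjoint_singleton_left.2 hx, ?_⟩, rfl⟩
  rw [induce_singleton_eq_top]
  exact connected_top

lemma disjoint_compContaining : Disjoint (compContaining G S x) S :=
  Set.disjoint_sUnion_left.2 fun _ hA => hA.2.1

lemma connected_induce_compContaining (hx : x ∉ S) :
    (G.induce (compContaining G S x)).Connected := by
  obtain ⟨A, hA, -⟩ := mem_compContaining_self (G := G) hx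
  exact induce_sUnion_connected_of_pairwise_not_disjoint ⟨A, hA⟩
    (fun hA hB => ⟨x, hA.1, hB.1⟩) fun hA => hA.2.2

lemma subset_compContaining (hx : x ∉ S) (hA : Disjoint A S) (hconn : (G.induce A).Preconnected)
    (hmeet : (A ∩ compContaining G S x).Nonempty) : A ⊆ compContaining G S x := by
  have hunion : A ∪ compContaining G S x ∈ {A | x ∈ A ∧ Disjoint A S ∧ (G.induce A).Connected} :=
    ⟨Or.inr (mem_compContaining_self hx), hA.union_left disjoint_compContaining,
      induce_union_connected hconn (connected_induce_compContaining hx).preconnected hmeet⟩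
  exact subset_union_left.trans (subset_sUnion_of_mem hunion)

lemma isCompOutside_compContaining (hx : x ∉ S) : IsCompOutside G S (compContaining G S x) := by
  refine ⟨⟨x, mem_compContaining_self hx⟩, disjoint_compContaining,
    connected_induce_compContaining hx, fun u hu v hv hvS huv => hv ?_⟩
  have hpair : Disjoint ({u, v} : Set V) S := by
    rw [Set.disjoint_insert_left, Set.disjoint_singleton_left]
    exact ⟨disjoint_compContaining.notMem_of_mem_left hu, hvS⟩
  exact subset_compContaining hx hpair (induce_pair_connected_of_adj huv).preconnected
    ⟨u, by simp, hu⟩ (by simp)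

lemma IsPMC.nbhdSet_compContaining {Ω : Set V} (hΩ : IsPMC G Ω)
    (hSΩ : S ⊆ Ω) (hxΩ : x ∈ Ω) (hxS : x ∉ S) : nbhdSet G (compContaining G S x) = S := by
  set C := compContaining G S x
  have hxC : x ∈ C := mem_compContaining_self hxS
  refine (isCompOutside_compContaining hxS).nbhdSet_subset.antisymm fun s hsS => ?_
  have hsC : s ∉ C := disjoint_compContaining.notMem_of_mem_right hsS
  by_cases hxs : G.Adj x s
  · exact ⟨hsC, x, hxC, hxs⟩
  obtain ⟨D', hD', ⟨-, d, hdD', hdx⟩, ⟨-, e, heD', hes⟩⟩ :=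
    hΩ.2 x hxΩ s (hSΩ hsS) (fun h => hxS (h ▸ hsS)) hxs
  have hD'S : Disjoint D' S := hD'.2.1.mono_right hSΩ
  have hdC : d ∈ C :=
    (isCompOutside_compContaining hxS).mem_of_adj hxC (hD'S.notMem_of_mem_left hdD') hdx.symm
  have hD'C : D' ⊆ C :=
    subset_compContaining hxS hD'S hD'.2.2.1.preconnected ⟨d, hdD', hdC⟩
  exact ⟨hsC, e, hD'C heD', hes⟩

end Components

theorem stmt_11_general (G : SimpleGraph V) (Ω : Set V) (hΩ : IsPMC G Ω)
    (D : Set V) (hD : IsCompOutside G Ω D) :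
    IsMinSep G (nbhdSet G D) := by
  set S := nbhdSet G D
  have hSΩ : S ⊆ Ω := hD.nbhdSet_subset
  obtain ⟨x, hxΩ, hxS⟩ := Set.exists_of_ssubset (hSΩ.ssubset_of_ne (hΩ.1 D hD))
  have hxD : x ∉ D := hD.2.1.notMem_of_mem_right hxΩ
  refine ⟨D, compContaining G S x, fun h => hxD (h ▸ mem_compContaining_self hxS),
    isFullComp_nbhdSet hD.2.2.1, isCompOutside_compContaining hxS,
    hΩ.nbhdSet_compContaining hSΩ hxΩ hxS⟩

/-- For a PMC `Ω` and a component `D` of `G - Ω`, the set `N(D)` is a minimal separator. -/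
theorem stmt_11 [Fintype V] (G : SimpleGraph V) (Ω : Set V) (hΩ : IsPMC G Ω)
    (D : Set V) (hD : IsCompOutside G Ω D) :
    IsMinSep G (nbhdSet G D) :=
  stmt_11_general G Ω hΩ D hD
end

section
/- Let G be a graph, S a minimal separator, A a full component of S, and suppose x, y ∈ S are such that each of N(x) ∩ A and N(y) ∩ A is the union of a (disjoint) collection of maximal strong modules of G[A], where the quotient graph of G[A] by its maximal strong modules is a clique. Then A ∩ (N(x) \ N(y)) is complete to A ∩ (N(y) \ N(x)), i.e., every vertex of the first set is adjacent to every vertex of the second. -/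
open SimpleGraph Set

variable {V : Type*}

/-- `M` is a module of the induced subgraph `G[A]`. -/
def IsModuleOn (G : SimpleGraph V) (A M : Set V) : Prop :=
  M ⊆ A ∧ ∀ x ∈ M, ∀ y ∈ M, ∀ z ∈ A \ M, (G.Adj x z ↔ G.Adj y z)

/-- `M` is a strong module of `G[A]`: a proper module overlapping no other module. -/
def IsStrongOn (G : SimpleGraph V) (A M : Set V) : Prop :=
  IsModuleOn G A M ∧ M ≠ A ∧
    ∀ M' : Set V, IsModuleOn G A M' → M ⊆ M' ∨ M' ⊆ M ∨ M ∩ M' = ∅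

/-- `M` is a maximal strong module of `G[A]`. -/
def IsMaxStrongOn (G : SimpleGraph V) (A M : Set V) : Prop :=
  M.Nonempty ∧ IsStrongOn G A M ∧
    ∀ M' : Set V, M'.Nonempty → IsStrongOn G A M' → M ⊆ M' → M' = M

/-- The quotient of `G[A]` by its maximal strong modules is a clique. -/
def QuoIsCliqueOn (G : SimpleGraph V) (A : Set V) : Prop :=
  ∀ M M' : Set V, IsMaxStrongOn G A M → IsMaxStrongOn G A M' → M ≠ M' →
    ∀ x ∈ M, ∀ y ∈ M', G.Adj x y

section ModularDecomposition

variable {G : SimpleGraph V} {A : Set V} {a : V}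

lemma isModuleOn_singleton (ha : a ∈ A) : IsModuleOn G A {a} := by
  refine ⟨singleton_subset_iff.mpr ha, ?_⟩
  rintro u rfl v rfl z -
  rfl

lemma isStrongOn_singleton (ha : a ∈ A) (hA : {a} ≠ A) : IsStrongOn G A {a} := by
  refine ⟨isModuleOn_singleton ha, hA, fun M _ => ?_⟩
  by_cases h : a ∈ M
  · exact Or.inl (singleton_subset_iff.mpr h)
  · exact Or.inr (Or.inr (singleton_inter_eq_empty.mpr h))

lemma exists_isMaxStrongOn_mem [Finite V] (ha : a ∈ A) (hA : {a} ≠ A) :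
    ∃ M, IsMaxStrongOn G A M ∧ a ∈ M := by
  obtain ⟨M, -, ⟨haM, hM⟩, hmax⟩ := Finite.exists_le_maximal
    (p := fun M : Set V => a ∈ M ∧ IsStrongOn G A M)
    ⟨mem_singleton a, isStrongOn_singleton ha hA⟩
  refine ⟨M, ⟨⟨a, haM⟩, hM, fun M' _ hM' hMM' => ?_⟩, haM⟩
  exact (hmax ⟨hMM' haM, hM'⟩ hMM').antisymm hMM'

end ModularDecomposition

theorem stmt_14_general [Fintype V] (G : SimpleGraph V) (A : Set V) (x y : V)
    (hquo : QuoIsCliqueOn G A)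
    (hxmod : ∀ M : Set V, IsMaxStrongOn G A M →
      M ⊆ G.neighborSet x ∨ M ∩ G.neighborSet x = ∅) :
    ∀ a ∈ A ∩ (G.neighborSet x \ G.neighborSet y),
      ∀ b ∈ A ∩ (G.neighborSet y \ G.neighborSet x), G.Adj a b := by
  rintro a ⟨haA, hax, -⟩ b ⟨hbA, -, hbx⟩
  have hab : a ≠ b := fun h => hbx (h ▸ hax)
  obtain ⟨Ma, hMa, haMa⟩ := exists_isMaxStrongOn_mem (G := G) haA
    fun h => hab (mem_singleton_iff.mp (h ▸ hbA)).symm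
  obtain ⟨Mb, hMb, hbMb⟩ := exists_isMaxStrongOn_mem (G := G) hbA
    fun h => hab (mem_singleton_iff.mp (h ▸ haA))
  -- The module of `a` lies inside `N(x)` and `b` does not, so `a` and `b` lie in different ones.
  have hMax : Ma ⊆ G.neighborSet x :=
    (hxmod Ma hMa).resolve_right (nonempty_iff_ne_empty.mp ⟨a, haMa, hax⟩)
  exact hquo Ma Mb hMa hMb (fun h => hbx (hMax (h ▸ hbMb))) a haMa b hbMb

/-- Claim 4 (`cl:edge`): if `N(x) ∩ A` and `N(y) ∩ A` are unions of maximal strong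
modules of `G[A]` and the quotient of `G[A]` is a clique, then
`A ∩ (N(x) \ N(y))` is complete to `A ∩ (N(y) \ N(x))`. -/
theorem stmt_14 [Fintype V] (G : SimpleGraph V) (S A : Set V)
    (hS : IsMinSep G S) (hA : IsFullComp G S A) (x y : V) (hx : x ∈ S) (hy : y ∈ S)
    (hquo : QuoIsCliqueOn G A)
    (hxmod : ∀ M : Set V, IsMaxStrongOn G A M →
      M ⊆ G.neighborSet x ∨ M ∩ G.neighborSet x = ∅)
    (hymod : ∀ M : Set V, IsMaxStrongOn G A M →
      M ⊆ G.neighborSet y ∨ M ∩ G.neighborSet y = ∅) :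
    ∀ a ∈ A ∩ (G.neighborSet x \ G.neighborSet y),
      ∀ b ∈ A ∩ (G.neighborSet y \ G.neighborSet x), G.Adj a b :=
  stmt_14_general G A x y hquo hxmod
end

section
/- Let G be a graph and D ⊆ V(G) with |D| ≥ 2 and G[D] connected. Let M^p and M^q be distinct maximal strong modules of G[D] that are adjacent in the quotient graph of G[D], and let p ∈ M^p, q ∈ M^q. Then for each vertex u ∈ N(D), at least one of the following holds: (a) u ∈ N[p] ∪ N[q]; (b) there is an induced P₄ in G with u as one endpoint and the other three vertices in D; (c) the quotient graph of G[D] is a clique and N(u) ∩ D is a union of maximal strong modules of G[D]. -/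
open SimpleGraph Set

variable {V : Type*}

/-!
Suppose (a) and (b) fail: `u` sees neither `p` nor `q`, and no induced `P₄` starts at `u` and
continues in `D`. Then the component `C` of `p` in `G[D \ N(u)]` is a module of `G[D]`: a neighbour
of `u` in `D` that sees a vertex of `C` but misses an adjacent one would start such a `P₄`. It
contains `q` and misses the neighbours of `u` in `D`.

If the complement of `G[D]` were connected, then (as `G[D]` is connected too) two overlapping
modules covering `D` would be nested, so a maximal proper module is strong and `C` lies in a
maximal strong module, which would then contain both `p` and `q`. Hence the complement is
disconnected, and the maximal strong modules of `G[D]` are exactly its co-components, which are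
pairwise complete: the quotient is a clique. Finally one of `p`, `q` lies outside a given
co-component `K` and is adjacent to all of it; so if `K` met `N(u)` without lying inside it, a
non-edge `x y` of `K` with `x ∈ N(u)`, `y ∉ N(u)` would give an induced `P₄` through `u`, `x`,
`p` (or `q`) and `y`.
-/

-- The vertex set of the component of `v` in `H[S]`; empty when `v ∉ S`.
def componentIn (H : SimpleGraph V) (S : Set V) (v : V) : Set V :=
  {d | ∃ (hd : d ∈ S) (hv : v ∈ S), (H.induce S).Reachable ⟨d, hd⟩ ⟨v, hv⟩}

section InducedComponents

variable {H : SimpleGraph V} {S T : Set V} {v x y : V}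

lemma componentIn_subset : componentIn H S v ⊆ S := fun _ ⟨hd, _, _⟩ => hd

lemma mem_componentIn_self (hv : v ∈ S) : v ∈ componentIn H S v := ⟨hv, hv, .refl _⟩

lemma mem_componentIn_of_adj (hx : x ∈ componentIn H S v) (hy : y ∈ S) (hxy : H.Adj x y) :
    y ∈ componentIn H S v := by
  obtain ⟨hxS, hv, hr⟩ := hx
  exact ⟨hy, hv, (induce_adj.mpr hxy.symm : (H.induce S).Adj ⟨y, hy⟩ ⟨x, hxS⟩).reachable.trans hr⟩

lemma componentIn_eq_of_mem (hx : x ∈ componentIn H S v) :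
    componentIn H S x = componentIn H S v := by
  obtain ⟨hxS, hv, hr⟩ := hx
  ext d
  constructor
  · rintro ⟨hd, _, hdx⟩
    exact ⟨hd, hv, hdx.trans hr⟩
  · rintro ⟨hd, _, hdv⟩
    exact ⟨hd, hxS, hdv.trans hr.symm⟩

lemma componentIn_subset_of_forall_adj (hv : v ∈ T)
    (hT : ∀ a ∈ S, ∀ b ∈ S, H.Adj a b → a ∈ T → b ∈ T) : componentIn H S v ⊆ T := by
  rintro d ⟨hd, _, ⟨w⟩⟩
  by_contra hdT
  obtain ⟨e, -, he, he'⟩ := w.reverse.exists_boundary_dart {a | (a : V) ∈ T} hv hdT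
  exact he' (hT _ e.fst.2 _ e.snd.2 e.adj he)

lemma componentIn_eq_self_iff (hv : v ∈ S) :
    componentIn H S v = S ↔ (H.induce S).Preconnected := by
  refine ⟨fun h a b => ?_, fun h => componentIn_subset.antisymm fun d hd => ⟨hd, hv, h _ _⟩⟩
  obtain ⟨_, _, ha⟩ : (a : V) ∈ componentIn H S v := h.symm ▸ a.2
  obtain ⟨_, _, hb⟩ : (b : V) ∈ componentIn H S v := h.symm ▸ b.2
  exact ha.trans hb.symm

lemma subset_of_preconnected_induce (hpre : (H.induce S).Preconnected) (hvS : v ∈ S)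
    (hv : v ∈ T) (hT : ∀ a ∈ S, ∀ b ∈ S, H.Adj a b → a ∈ T → b ∈ T) : S ⊆ T :=
  ((componentIn_eq_self_iff hvS).mpr hpre).symm.subset.trans
    (componentIn_subset_of_forall_adj hv hT)

end InducedComponents

section Modules

variable {G : SimpleGraph V} {D M M' X Y : Set V}

lemma isModuleOn_of_forall_adj (hX : X ⊆ D) (h : ∀ x ∈ X, ∀ z ∈ D \ X, G.Adj x z) :
    IsModuleOn G D X :=
  ⟨hX, fun x hx y hy z hz => iff_of_true (h x hx z hz) (h y hy z hz)⟩

lemma IsModuleOn.union (hX : IsModuleOn G D X) (hY : IsModuleOn G D Y)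
    (h : (X ∩ Y).Nonempty) : IsModuleOn G D (X ∪ Y) := by
  obtain ⟨t, htX, htY⟩ := h
  have key : ∀ w ∈ X ∪ Y, ∀ z ∈ D \ (X ∪ Y), (G.Adj w z ↔ G.Adj t z) := by
    rintro w (hw | hw) z ⟨hz, hzXY⟩
    · exact hX.2 w hw t htX z ⟨hz, fun h => hzXY (.inl h)⟩
    · exact hY.2 w hw t htY z ⟨hz, fun h => hzXY (.inr h)⟩
  exact ⟨union_subset hX.1 hY.1, fun x hx y hy z hz => (key x hx z hz).trans (key y hy z hz).symm⟩

lemma IsMaxStrongOn.eq_of_mem {x : V} (hM : IsMaxStrongOn G D M) (hM' : IsMaxStrongOn G D M')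
    (hx : x ∈ M) (hx' : x ∈ M') : M = M' := by
  rcases hM.2.1.2.2 M' hM'.2.1.1 with h | h | h
  · exact (hM.2.2 M' hM'.1 hM'.2.1 h).symm
  · exact hM'.2.2 M hM.1 hM.2.1 h
  · exact absurd h (nonempty_iff_ne_empty.mp ⟨x, hx, hx'⟩)

lemma IsModuleOn.adj_iff_of_overlap {a b z w : V} (hX : IsModuleOn G D X)
    (hY : IsModuleOn G D Y) (hXY : D ⊆ X ∪ Y) (ha : a ∈ Y \ X) (hb : b ∈ X \ Y)
    (hz : z ∈ X ∩ Y) (hw : w ∈ D \ (X ∩ Y)) : G.Adj z w ↔ G.Adj a b := by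
  rcases hXY hw.1 with hwX | hwY
  · have hwY : w ∉ Y := fun h => hw.2 ⟨hwX, h⟩
    calc G.Adj z w ↔ G.Adj a w := hY.2 z hz.2 a ha.1 w ⟨hw.1, hwY⟩
      _ ↔ G.Adj a b := by
        rw [G.adj_comm a w, G.adj_comm a b]
        exact hX.2 w hwX b hb.1 a ⟨hY.1 ha.1, ha.2⟩
  · have hwX : w ∉ X := fun h => hw.2 ⟨h, hwY⟩
    calc G.Adj z w ↔ G.Adj b w := hX.2 z hz.1 b hb.1 w ⟨hw.1, hwX⟩
      _ ↔ G.Adj b a := by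
        rw [G.adj_comm b w, G.adj_comm b a]
        exact hY.2 w hwY a ha.1 b ⟨hX.1 hb.1, hb.2⟩
      _ ↔ G.Adj a b := G.adj_comm b a

-- Otherwise `X ∩ Y` would be complete or anticomplete to the rest of `D`.
lemma subset_or_subset_of_subset_union (hconn : (G.induce D).Preconnected)
    (hco : (Gᶜ.induce D).Preconnected) (hX : IsModuleOn G D X) (hY : IsModuleOn G D Y)
    (hXY : D ⊆ X ∪ Y) (h : (X ∩ Y).Nonempty) : X ⊆ Y ∨ Y ⊆ X := by
  by_contra! hnest
  obtain ⟨b, hbX, hbY⟩ := not_subset.mp hnest.1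
  obtain ⟨a, haY, haX⟩ := not_subset.mp hnest.2
  obtain ⟨z, hz⟩ := h
  have hzD : z ∈ D := hX.1 hz.1
  have hb : b ∉ X ∩ Y := fun h => hbY h.2
  have key := fun {c w : V} (hc : c ∈ X ∩ Y) (hw : w ∈ D \ (X ∩ Y)) =>
    hX.adj_iff_of_overlap hY hXY ⟨haY, haX⟩ ⟨hbX, hbY⟩ hc hw
  by_cases hab : G.Adj a b
  · refine hb (subset_of_preconnected_induce hco hzD hz (fun c _ w hw hcw hc => ?_) (hX.1 hbX))
    by_contra hwT
    exact ((G.compl_adj c w).mp hcw).2 ((key hc ⟨hw, hwT⟩).mpr hab)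
  · refine hb (subset_of_preconnected_induce hconn hzD hz (fun c _ w hw hcw hc => ?_) (hX.1 hbX))
    by_contra hwT
    exact hab ((key hc ⟨hw, hwT⟩).mp hcw)

lemma isStrongOn_of_maximal (hconn : (G.induce D).Preconnected)
    (hco : (Gᶜ.induce D).Preconnected) (hM : Maximal (fun X => IsModuleOn G D X ∧ X ≠ D) M) :
    IsStrongOn G D M := by
  refine ⟨hM.prop.1, hM.prop.2, fun X hX => ?_⟩
  by_contra! h
  obtain ⟨hMX, hXM, hne⟩ := h
  have hU : M ∪ X = D := by
    by_contra hU
    exact hXM (subset_union_right.trans (hM.2 ⟨hM.prop.1.union hX hne, hU⟩ subset_union_left))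
  rcases subset_or_subset_of_subset_union hconn hco hM.prop.1 hX hU.ge hne with h | h
  exacts [hMX h, hXM h]

lemma exists_isMaxStrongOn_superset [Finite V] {N : Set V} (hconn : (G.induce D).Preconnected)
    (hco : (Gᶜ.induce D).Preconnected) (hN : IsModuleOn G D N) (hNne : N.Nonempty)
    (hND : N ≠ D) : ∃ M, IsMaxStrongOn G D M ∧ N ⊆ M := by
  obtain ⟨M, hNM, hM⟩ := Finite.exists_le_maximal (p := fun X => IsModuleOn G D X ∧ X ≠ D)
    ⟨hN, hND⟩
  refine ⟨M, ⟨hNne.mono hNM, isStrongOn_of_maximal hconn hco hM, fun M' _ hM' hMM' => ?_⟩, hNM⟩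
  exact (hM.2 ⟨hM'.1, hM'.2.1⟩ hMM').antisymm hMM'

end Modules

section CoComponents

variable {G : SimpleGraph V} {D M : Set V} {v x z : V}

lemma adj_of_mem_componentIn_compl (hx : x ∈ componentIn Gᶜ D v)
    (hz : z ∈ D \ componentIn Gᶜ D v) : G.Adj x z := by
  by_contra h
  have hxz : x ≠ z := fun e => hz.2 (e ▸ hx)
  exact hz.2 (mem_componentIn_of_adj hx hz.1 ((G.compl_adj x z).mpr ⟨hxz, h⟩))

lemma isModuleOn_componentIn_compl : IsModuleOn G D (componentIn Gᶜ D v) :=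
  isModuleOn_of_forall_adj componentIn_subset fun _ hx _ hz => adj_of_mem_componentIn_compl hx hz

lemma isStrongOn_componentIn_compl (hco : ¬ (Gᶜ.induce D).Preconnected) (hv : v ∈ D) :
    IsStrongOn G D (componentIn Gᶜ D v) := by
  set K := componentIn Gᶜ D v
  refine ⟨isModuleOn_componentIn_compl, fun h => hco ((componentIn_eq_self_iff hv).mp h),
    fun X hX => ?_⟩
  by_contra! h
  obtain ⟨hKX, hXK, x, hxK, hxX⟩ := h
  obtain ⟨x', hx'X, hx'K⟩ := not_subset.mp hXK
  refine hKX ((componentIn_eq_of_mem hxK).symm.subset.trans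
    ((componentIn_subset_of_forall_adj (T := K ∩ X) ⟨hxK, hxX⟩ fun a _ b hb hab ha => ?_).trans
      inter_subset_right))
  have hbK : b ∈ K := mem_componentIn_of_adj ha.1 hb hab
  refine ⟨hbK, by_contra fun hbX => ((G.compl_adj a b).mp hab).2 ?_⟩
  -- `x' ∈ X \ K` is adjacent to `b ∈ K`, and `X` is a module
  exact (hX.2 a ha.2 x' hx'X b ⟨hb, hbX⟩).mpr
    (adj_of_mem_componentIn_compl hbK ⟨hX.1 hx'X, hx'K⟩).symm

lemma IsMaxStrongOn.eq_componentIn_compl {m : V} (hco : ¬ (Gᶜ.induce D).Preconnected)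
    (hM : IsMaxStrongOn G D M) (hm : m ∈ M) : M = componentIn Gᶜ D m := by
  set K := componentIn Gᶜ D m
  have hmD : m ∈ D := hM.2.1.1.1 hm
  have hmK : m ∈ K := mem_componentIn_self hmD
  have hK := isStrongOn_componentIn_compl hco hmD
  have hKM : K ⊆ M := by
    rcases hK.2.2 M hM.2.1.1 with h | h | h
    · exact h
    · exact (hM.2.2 K ⟨m, hmK⟩ hK h).le
    · exact absurd h (nonempty_iff_ne_empty.mp ⟨m, hmK, hm⟩)
  refine subset_antisymm (fun t htM => by_contra fun htK => ?_) hKM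
  have hY : IsModuleOn G D (K ∪ (D \ M)) := by
    refine isModuleOn_of_forall_adj (union_subset componentIn_subset sdiff_subset) ?_
    rintro y hy z ⟨hzD, hzY⟩
    rcases hy with hyK | hyM
    · exact adj_of_mem_componentIn_compl hyK (show z ∈ D \ K from ⟨hzD, fun h => hzY (.inl h)⟩)
    · have hzM : z ∈ M := by_contra fun h => hzY (.inr ⟨hzD, h⟩)
      have hmy : G.Adj m y := adj_of_mem_componentIn_compl hmK ⟨hyM.1, fun h => hyM.2 (hKM h)⟩
      exact ((hM.2.1.1.2 z hzM m hm y hyM).mpr hmy).symm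
  rcases hM.2.1.2.2 _ hY with h | h | h
  · rcases h htM with h' | h'
    exacts [htK h', h'.2 htM]
  · exact hM.2.1.2.1
      (hM.2.1.1.1.antisymm fun d hd => by_contra fun hdM => hdM (h (.inr ⟨hd, hdM⟩)))
  · exact nonempty_iff_ne_empty.mp (⟨m, hm, .inl hmK⟩ : (M ∩ (K ∪ (D \ M))).Nonempty) h

lemma quoIsCliqueOn_of_not_preconnected_compl (hco : ¬ (Gᶜ.induce D).Preconnected) :
    QuoIsCliqueOn G D := by
  intro M M' hM hM' hne x hx y hy
  have hyM : y ∉ M := fun h => hne (hM.eq_of_mem hM' h hy)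
  rw [hM.eq_componentIn_compl hco hx] at hyM
  exact adj_of_mem_componentIn_compl (mem_componentIn_self (hM.2.1.1.1 hx)) ⟨hM'.2.1.1.1 hy, hyM⟩

end CoComponents

def NoInducedP4From (G : SimpleGraph V) (u : V) (D : Set V) : Prop :=
  ∀ a ∈ D, ∀ b ∈ D, ∀ c ∈ D,
    G.Adj u a → G.Adj a b → G.Adj b c → ¬ G.Adj u b → ¬ G.Adj u c → G.Adj a c

section Endpoint

variable {G : SimpleGraph V} {D : Set V} {u v w : V}

lemma isModuleOn_componentIn_diff_neighborSet (hP4 : NoInducedP4From G u D) :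
    IsModuleOn G D (componentIn G (D \ G.neighborSet u) v) := by
  set C := componentIn G (D \ G.neighborSet u) v
  have hspread : ∀ z ∈ D, G.Adj u z → ∀ x ∈ C, G.Adj x z → ∀ y ∈ C, G.Adj y z := by
    intro z hz huz x hx hxz
    refine (componentIn_eq_of_mem hx).symm.subset.trans
      (componentIn_subset_of_forall_adj (T := {w | G.Adj w z}) hxz ?_)
    exact fun a ha b hb hab haz => (hP4 z hz a ha.1 b hb.1 huz haz.symm hab ha.2 hb.2).symm
  refine ⟨componentIn_subset.trans sdiff_subset, fun x hx y hy z hz => ?_⟩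
  by_cases huz : G.Adj u z
  · exact ⟨fun h => hspread z hz.1 huz x hx h y hy, fun h => hspread z hz.1 huz y hy h x hx⟩
  · have hzS : z ∈ D \ G.neighborSet u := ⟨hz.1, huz⟩
    exact iff_of_false (fun h => hz.2 (mem_componentIn_of_adj hx hzS h))
      (fun h => hz.2 (mem_componentIn_of_adj hy hzS h))

lemma componentIn_compl_subset_or_disjoint_neighborSet (hP4 : NoInducedP4From G u D)
    (hw : w ∈ D \ componentIn Gᶜ D v) (huw : ¬ G.Adj u w) :
    componentIn Gᶜ D v ⊆ G.neighborSet u ∨ componentIn Gᶜ D v ∩ G.neighborSet u = ∅ := by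
  set K := componentIn Gᶜ D v
  refine or_iff_not_imp_right.mpr fun h => ?_
  obtain ⟨x, hxK, hux⟩ := nonempty_iff_ne_empty.mpr h
  refine (componentIn_eq_of_mem hxK).symm.subset.trans
    ((componentIn_subset_of_forall_adj (T := K ∩ G.neighborSet u) ⟨hxK, hux⟩
      fun a _ b hb hab ha => ?_).trans inter_subset_right)
  have hbK : b ∈ K := mem_componentIn_of_adj ha.1 hb hab
  refine ⟨hbK, by_contra fun hub => ((G.compl_adj a b).mp hab).2 ?_⟩
  -- otherwise `u a w b` is an induced `P₄`, as `w` is adjacent to all of `K`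
  exact hP4 a (componentIn_subset ha.1) w hw.1 b hb ha.2 (adj_of_mem_componentIn_compl ha.1 hw)
    (adj_of_mem_componentIn_compl hbK hw).symm huw hub

end Endpoint

theorem stmt_15_general [Fintype V] (G : SimpleGraph V) (D : Set V)
    (hconn : (G.induce D).Connected)
    (Mp Mq : Set V) (hMp : IsMaxStrongOn G D Mp) (hMq : IsMaxStrongOn G D Mq)
    (hne : Mp ≠ Mq) (hadj : ∀ x ∈ Mp, ∀ y ∈ Mq, G.Adj x y)
    (p q : V) (hp : p ∈ Mp) (hq : q ∈ Mq)
    (u : V) (hu : u ∈ nbhdSet G D) :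
    (u = p ∨ G.Adj p u ∨ u = q ∨ G.Adj q u) ∨
    (∃ a b c : V, a ∈ D ∧ b ∈ D ∧ c ∈ D ∧
      G.Adj u a ∧ G.Adj a b ∧ G.Adj b c ∧
      ¬ G.Adj u b ∧ ¬ G.Adj u c ∧ ¬ G.Adj a c) ∨
    (QuoIsCliqueOn G D ∧
      ∀ M : Set V, IsMaxStrongOn G D M →
        M ⊆ G.neighborSet u ∨ M ∩ G.neighborSet u = ∅) := by
  refine or_iff_not_imp_left.mpr fun hpq => or_iff_not_imp_left.mpr fun hpath => ?_
  have hP4 : NoInducedP4From G u D := fun a ha b hb c hc hua hab hbc hub huc =>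
    by_contra fun hac => hpath ⟨a, b, c, ha, hb, hc, hua, hab, hbc, hub, huc, hac⟩
  have hpD : p ∈ D := hMp.2.1.1.1 hp
  have hqD : q ∈ D := hMq.2.1.1.1 hq
  have hup : ¬ G.Adj u p := fun h => hpq (.inr (.inl h.symm))
  have huq : ¬ G.Adj u q := fun h => hpq (.inr (.inr (.inr h.symm)))
  by_cases hco : (Gᶜ.induce D).Preconnected
  · set C := componentIn G (D \ G.neighborSet u) p
    have hpC : p ∈ C := mem_componentIn_self ⟨hpD, hup⟩
    have hqC : q ∈ C := mem_componentIn_of_adj hpC ⟨hqD, huq⟩ (hadj p hp q hq)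
    obtain ⟨a, haD, hau⟩ := hu.2
    have hCD : C ≠ D := fun h => (componentIn_subset (h.symm ▸ haD : a ∈ C)).2 hau.symm
    obtain ⟨M, hM, hCM⟩ := exists_isMaxStrongOn_superset hconn.preconnected hco
      (isModuleOn_componentIn_diff_neighborSet hP4) ⟨p, hpC⟩ hCD
    exact absurd ((hMp.eq_of_mem hM hp (hCM hpC)).trans (hMq.eq_of_mem hM hq (hCM hqC)).symm) hne
  refine ⟨quoIsCliqueOn_of_not_preconnected_compl hco, fun M hM => ?_⟩
  obtain ⟨w, hw, huw⟩ : ∃ w ∈ D \ M, ¬ G.Adj u w := by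
    by_cases hpM : p ∈ M
    · exact ⟨q, ⟨hqD, fun hqM => hne ((hMp.eq_of_mem hM hp hpM).trans
        (hMq.eq_of_mem hM hq hqM).symm)⟩, huq⟩
    · exact ⟨p, ⟨hpD, hpM⟩, hup⟩
  obtain ⟨m, hm⟩ := hM.1
  rw [hM.eq_componentIn_compl hco hm] at hw ⊢
  exact componentIn_compl_subset_or_disjoint_neighborSet hP4 hw huw

/-- Neighborhood Decomposition Lemma: for a connected `D` with `|D| ≥ 2`, adjacent
maximal strong modules `Mp ≠ Mq` of `G[D]` with `p ∈ Mp`, `q ∈ Mq`, every `u ∈ N(D)`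
satisfies (a), (b), or (c). -/
theorem stmt_15 [Fintype V] (G : SimpleGraph V) (D : Set V)
    (hD2 : 2 ≤ D.ncard) (hconn : (G.induce D).Connected)
    (Mp Mq : Set V) (hMp : IsMaxStrongOn G D Mp) (hMq : IsMaxStrongOn G D Mq)
    (hne : Mp ≠ Mq) (hadj : ∀ x ∈ Mp, ∀ y ∈ Mq, G.Adj x y)
    (p q : V) (hp : p ∈ Mp) (hq : q ∈ Mq)
    (u : V) (hu : u ∈ nbhdSet G D) :
    (u = p ∨ G.Adj p u ∨ u = q ∨ G.Adj q u) ∨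
    (∃ a b c : V, a ∈ D ∧ b ∈ D ∧ c ∈ D ∧
      G.Adj u a ∧ G.Adj a b ∧ G.Adj b c ∧
      ¬ G.Adj u b ∧ ¬ G.Adj u c ∧ ¬ G.Adj a c) ∨
    (QuoIsCliqueOn G D ∧
      ∀ M : Set V, IsMaxStrongOn G D M →
        M ⊆ G.neighborSet u ∨ M ∩ G.neighborSet u = ∅) :=
  stmt_15_general G D hconn Mp Mq hMp hMq hne hadj p q hp hq u hu
end

section
/- Let G be a connected graph with |V(G)| > 1 whose complement is also connected, and let 𝓜 be the partition of V(G) into maximal strong modules. Then the quotient graph G/𝓜 is prime, i.e., all its modules are trivial. -/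
open SimpleGraph Set

variable {V : Type*}

/-- The quotient graph of `G` by its maximal strong modules. -/
def quoGraph (G : SimpleGraph V) :
    SimpleGraph {M : Set V // IsMaxStrongOn G Set.univ M} where
  Adj M M' := M ≠ M' ∧ ∀ x ∈ M.1, ∀ y ∈ M'.1, G.Adj x y
  symm := ⟨by
    rintro M M' ⟨hne, h⟩
    exact ⟨hne.symm, fun x hx y hy => (h y hy x hx).symm⟩⟩
  loopless := ⟨fun M h => h.1 rfl⟩

/-!
When `G` and `Gᶜ` are both connected, two proper modules covering `V` must be nested: otherwise the
part of one lying outside the other sees the rest of the graph uniformly, which disconnects `G` or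
`Gᶜ`. Hence two overlapping, non-nested proper modules have a proper union, so the nonempty maximal
proper modules are strong; they are exactly the maximal strong modules and partition `V`. A nontrivial module `N` of the quotient
would lift to the proper module `⋃ N` strictly containing a maximal one.
-/

namespace SimpleGraph

variable {G : SimpleGraph V}

def IsModule (G : SimpleGraph V) (M : Set V) : Prop :=
  ∀ ⦃x⦄, x ∈ M → ∀ ⦃y⦄, y ∈ M → ∀ ⦃z⦄, z ∉ M → (G.Adj x z ↔ G.Adj y z)

lemma isModuleOn_univ_iff {M : Set V} : IsModuleOn G univ M ↔ G.IsModule M :=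
  ⟨fun ⟨_, h⟩ _ hx _ hy z hz => h _ hx _ hy z ⟨trivial, hz⟩,
    fun h => ⟨subset_univ M, fun _ hx _ hy _ hz => h hx hy hz.2⟩⟩

lemma isModule_singleton (v : V) : G.IsModule {v} := by
  rintro x rfl y rfl z -
  rfl

lemma IsModule.union {X Y : Set V} (hX : G.IsModule X) (hY : G.IsModule Y)
    (hXY : (X ∩ Y).Nonempty) : G.IsModule (X ∪ Y) := by
  obtain ⟨w, hwX, hwY⟩ := hXY
  have adj_iff_adj_w : ∀ x ∈ X ∪ Y, ∀ z ∉ X ∪ Y, (G.Adj x z ↔ G.Adj w z) := by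
    rintro x (hx | hx) z hz
    · exact hX hx hwX fun h => hz (Or.inl h)
    · exact hY hx hwY fun h => hz (Or.inr h)
  intro x hx y hy z hz
  rw [adj_iff_adj_w x hx z hz, adj_iff_adj_w y hy z hz]

lemma IsModule.adj_iff_adj {X Y : Set V} (hX : G.IsModule X) (hY : G.IsModule Y)
    (hXY : Disjoint X Y) {x x' y y' : V} (hx : x ∈ X) (hx' : x' ∈ X) (hy : y ∈ Y)
    (hy' : y' ∈ Y) : G.Adj x y ↔ G.Adj x' y' := by
  rw [hX hx hx' (hXY.notMem_of_mem_right hy), G.adj_comm, G.adj_comm x' y',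
    hY hy hy' (hXY.notMem_of_mem_left hx')]

lemma eq_empty_or_eq_univ_of_adj_iff (hconn : G.Connected) (hco : Gᶜ.Connected) {A : Set V}
    {p : Prop} (hA : ∀ u ∈ A, ∀ v ∉ A, (G.Adj u v ↔ p)) : A = ∅ ∨ A = univ := by
  by_contra! hne
  obtain ⟨⟨a, ha⟩, hAuniv⟩ := hne
  obtain ⟨b, hb⟩ := (ne_univ_iff_exists_notMem A).mp hAuniv
  by_cases hp : p
  · obtain ⟨d, -, hdA, hdA'⟩ := (hco.preconnected a b).some.exists_boundary_dart A ha hb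
    exact d.adj.2 ((hA _ hdA _ hdA').mpr hp)
  · obtain ⟨d, -, hdA, hdA'⟩ := (hconn.preconnected a b).some.exists_boundary_dart A ha hb
    exact hp ((hA _ hdA _ hdA').mp d.adj)

lemma IsModule.subset_or_subset_of_union_eq_univ (hconn : G.Connected) (hco : Gᶜ.Connected)
    {X Y : Set V} (hX : G.IsModule X) (hY : G.IsModule Y) (hXY : X ∪ Y = univ) :
    X ⊆ Y ∨ Y ⊆ X := by
  by_contra! h
  obtain ⟨a, haX, haY⟩ := Set.sdiff_nonempty.mpr h.1
  obtain ⟨b, hbY, hbX⟩ := Set.sdiff_nonempty.mpr h.2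
  have hmemY : ∀ v ∉ X \ Y, v ∈ Y := fun v hv => by
    have : v ∈ X ∪ Y := hXY ▸ mem_univ v
    grind
  have uniform : ∀ u ∈ X \ Y, ∀ v ∉ X \ Y, (G.Adj u v ↔ G.Adj a b) := by
    rintro u ⟨huX, huY⟩ v hv
    rw [G.adj_comm, hY (hmemY v hv) hbY huY, G.adj_comm, hX huX haX hbX]
  rcases eq_empty_or_eq_univ_of_adj_iff hconn hco uniform with hempty | huniv
  · exact hempty.subset ⟨haX, haY⟩
  · exact (huniv.symm.subset (mem_univ b)).2 hbY

lemma IsMaxStrongOn.disjoint {M M' : Set V} (hM : IsMaxStrongOn G univ M)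
    (hM' : IsMaxStrongOn G univ M') (hne : M ≠ M') : Disjoint M M' := by
  rcases hM.2.1.2.2 M' hM'.2.1.1 with h | h | h
  · exact absurd (hM.2.2 M' hM'.1 hM'.2.1 h) hne.symm
  · exact absurd (hM'.2.2 M hM.1 hM.2.1 h) hne
  · exact Set.disjoint_iff_inter_eq_empty.mpr h

section Connected

variable (hconn : G.Connected) (hco : Gᶜ.Connected)
include hconn hco

lemma isMaxStrongOn_univ_of_maximal {W : Set V}
    (hW : Maximal (fun W => G.IsModule W ∧ W ≠ univ) W) (hWne : W.Nonempty) :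
    IsMaxStrongOn G univ W := by
  refine ⟨hWne, ⟨isModuleOn_univ_iff.mpr hW.1.1, hW.1.2, fun M hM => ?_⟩,
    fun M _ hM hWM => (hW.2 ⟨isModuleOn_univ_iff.mp hM.1, hM.2.1⟩ hWM).antisymm hWM⟩
  rw [isModuleOn_univ_iff] at hM
  by_cases hWM : (W ∩ M).Nonempty
  · by_cases hunion : W ∪ M = univ
    · exact (hW.1.1.subset_or_subset_of_union_eq_univ hconn hco hM hunion).imp id Or.inl
    · exact Or.inr <| Or.inl <|
        subset_union_right.trans (hW.2 ⟨hW.1.1.union hM hWM, hunion⟩ subset_union_left)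
  · exact Or.inr <| Or.inr <| Set.not_nonempty_iff_eq_empty.mp hWM

lemma exists_isMaxStrongOn_univ_superset [Finite V] {M : Set V} (hM : G.IsModule M)
    (hMuniv : M ≠ univ) (hMne : M.Nonempty) : ∃ W, IsMaxStrongOn G univ W ∧ M ⊆ W := by
  obtain ⟨W, hMW, hW⟩ := Finite.exists_le_maximal (p := fun W => G.IsModule W ∧ W ≠ univ)
    ⟨hM, hMuniv⟩
  exact ⟨W, isMaxStrongOn_univ_of_maximal hconn hco hW (hMne.mono hMW), hMW⟩

lemma exists_isMaxStrongOn_univ_mem [Finite V] [Nontrivial V] (v : V) :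
    ∃ M, IsMaxStrongOn G univ M ∧ v ∈ M := by
  obtain ⟨M, hM, hvM⟩ := exists_isMaxStrongOn_univ_superset hconn hco (isModule_singleton v)
    (singleton_ne_univ v) (singleton_nonempty v)
  exact ⟨M, hM, hvM rfl⟩

lemma IsMaxStrongOn.eq_of_subset [Finite V] {M W : Set V} (hM : IsMaxStrongOn G univ M)
    (hW : G.IsModule W) (hWuniv : W ≠ univ) (hMW : M ⊆ W) : W = M := by
  obtain ⟨W', hW', hWW'⟩ :=
    exists_isMaxStrongOn_univ_superset hconn hco hW hWuniv (hM.1.mono hMW)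
  have hW'M : W' = M := hM.2.2 W' hW'.1 hW'.2.1 (hMW.trans hWW')
  exact (hW'M ▸ hWW').antisymm hMW

end Connected

lemma quoGraph_adj_iff {M M' : {M : Set V // IsMaxStrongOn G univ M}} (hne : M ≠ M')
    {x y : V} (hx : x ∈ M.1) (hy : y ∈ M'.1) : (quoGraph G).Adj M M' ↔ G.Adj x y := by
  have hdisj := M.2.disjoint M'.2 (Subtype.coe_ne_coe.mpr hne)
  have hmod := fun (M : {M : Set V // IsMaxStrongOn G univ M}) => isModuleOn_univ_iff.mp M.2.2.1.1
  exact ⟨fun h => h.2 x hx y hy, fun h => ⟨hne, fun x' hx' y' hy' =>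
    ((hmod M).adj_iff_adj (hmod M') hdisj hx hx' hy hy').mp h⟩⟩

lemma mem_biUnion_iff_of_mem {N : Set {M : Set V // IsMaxStrongOn G univ M}}
    {M : {M : Set V // IsMaxStrongOn G univ M}} {v : V} (hv : v ∈ M.1) :
    v ∈ ⋃ M' ∈ N, M'.1 ↔ M ∈ N := by
  refine ⟨fun h => ?_, fun hM => mem_biUnion hM hv⟩
  obtain ⟨M', hM'N, hvM'⟩ := mem_iUnion₂.mp h
  by_contra hMN
  have hne : M'.1 ≠ M.1 := Subtype.coe_ne_coe.mpr fun h => hMN (h ▸ hM'N)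
  exact (M'.2.disjoint M.2 hne).notMem_of_mem_left hvM' hv

lemma IsModule.biUnion_of_quoGraph [Finite V] [Nontrivial V] (hconn : G.Connected)
    (hco : Gᶜ.Connected) {N : Set {M : Set V // IsMaxStrongOn G univ M}}
    (hN : (quoGraph G).IsModule N) : G.IsModule (⋃ M ∈ N, M.1) := by
  intro x hx y hy z hz
  obtain ⟨Mx, hMxN, hxMx⟩ := mem_iUnion₂.mp hx
  obtain ⟨My, hMyN, hyMy⟩ := mem_iUnion₂.mp hy
  obtain ⟨Mz, hMz, hzMz⟩ := exists_isMaxStrongOn_univ_mem hconn hco z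
  have hMzN : ⟨Mz, hMz⟩ ∉ N := fun h => hz ((mem_biUnion_iff_of_mem hzMz).mpr h)
  rw [← quoGraph_adj_iff (ne_of_mem_of_not_mem hMxN hMzN) hxMx hzMz,
    ← quoGraph_adj_iff (ne_of_mem_of_not_mem hMyN hMzN) hyMy hzMz]
  exact hN hMxN hMyN hMzN

end SimpleGraph

/-- If `G` and its complement are connected and `|V(G)| > 1`, then the quotient graph
of `G` by its maximal strong modules is prime: all its modules are trivial. -/
theorem stmt_16 [Fintype V] [Nontrivial V] (G : SimpleGraph V)
    (hconn : G.Connected) (hcoconn : Gᶜ.Connected) :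
    ∀ N : Set {M : Set V // IsMaxStrongOn G Set.univ M},
      (∀ a ∈ N, ∀ b ∈ N, ∀ c ∉ N, ((quoGraph G).Adj a c ↔ (quoGraph G).Adj b c)) →
      N = ∅ ∨ (∃ M, N = {M}) ∨ N = Set.univ := by
  intro N hN
  suffices N.Subsingleton ∨ N = univ by
    rcases this with hN | hN
    · exact hN.eq_empty_or_singleton.imp_right Or.inl
    · exact Or.inr (Or.inr hN)
  refine or_iff_not_imp_right.mpr fun hNuniv M₁ hM₁ M₂ hM₂ => ?_
  obtain ⟨M₃, hM₃⟩ := (ne_univ_iff_exists_notMem N).mp hNuniv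
  set U := ⋃ M ∈ N, M.1
  have hU : G.IsModule U := IsModule.biUnion_of_quoGraph hconn hcoconn hN
  have hUuniv : U ≠ univ := by
    obtain ⟨z, hz⟩ := M₃.2.1
    exact ne_univ_iff_exists_notMem U |>.mpr ⟨z, mt (mem_biUnion_iff_of_mem hz).mp hM₃⟩
  have hUM₁ : U = M₁.1 :=
    M₁.2.eq_of_subset hconn hcoconn hU hUuniv fun v hv => (mem_biUnion_iff_of_mem hv).mpr hM₁
  obtain ⟨w, hw⟩ := M₂.2.1
  have hwM₁ : w ∈ M₁.1 := hUM₁ ▸ (mem_biUnion_iff_of_mem hw).mpr hM₂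
  by_contra hne
  exact (M₁.2.disjoint M₂.2 (Subtype.coe_ne_coe.mpr hne)).notMem_of_mem_left hwM₁ hw
end

section
/- Let G be a P₇-free graph, S a minimal separator with full components A₁ and A₂, and let x, y ∈ S be nonadjacent to fixed vertices witnessing that certain structure holds. Specifically, suppose x, y, x', y' ∈ S, vertices u₁ˣ ∈ A₁ ∩ (N(x)\N(y)), u₁ʸ ∈ A₁ ∩ (N(y)\N(x)) with u₁ˣu₁ʸ ∈ E(G), u₂ˣ ∈ A₂ ∩ (N(x)\N(y)), u₂ʸ ∈ A₂ ∩ (N(y)\N(x)) with u₂ˣu₂ʸ ∈ E(G), a vertex w ∈ A₁ adjacent to x', u₁ˣ and u₁ʸ but not to x or y, with x' nonadjacent to x, y, u₁ˣ, u₁ʸ, u₂ˣ, u₂ʸ, and a vertex p₂ ∈ A₂ adjacent to u₂ʸ but not to x, y, u₂ˣ (in the case xy ∈ E(G)). Then G contains an induced P₇: if xy ∈ E(G), the path x'−w−u₁ˣ−x−y−u₂ʸ−p₂; if xy ∉ E(G), the path x'−w−u₁ˣ−x−u₂ˣ−u₂ʸ−y. Hence no such configuration exists in a P₇-free graph. 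-/
open SimpleGraph Set

variable {V : Type*}

lemma walk_mem_aux {G : SimpleGraph V} {S A B : Set V}
    (hA : IsCompOutside G S A) (hB : IsCompOutside G S B) :
    ∀ {u v : B}, (G.induce B).Walk u v → (u : V) ∈ A → (v : V) ∈ A := by
  intro u v p
  induction p with
  | nil => exact id
  | @cons a b c h p ih =>
    intro ha
    apply ih
    by_contra hb
    exact hA.2.2.2 _ ha _ hb (fun hS => (hB.2.1).ne_of_mem b.2 hS rfl) h

lemma comp_anticomplete_aux {G : SimpleGraph V} {S A B : Set V} (hAB : A ≠ B)
    (hA : IsCompOutside G S A) (hB : IsCompOutside G S B) :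
    ∀ a ∈ A, ∀ b ∈ B, ¬ G.Adj a b := by
  have hdisj : ∀ z, z ∈ A → z ∈ B → False := by
    intro z hzA hzB
    apply hAB
    apply Set.eq_of_subset_of_subset
    · intro v hv
      obtain ⟨p⟩ := hA.2.2.1 ⟨z, hzA⟩ ⟨v, hv⟩
      exact walk_mem_aux hB hA p hzB
    · intro v hv
      obtain ⟨p⟩ := hB.2.2.1 ⟨z, hzB⟩ ⟨v, hv⟩
      exact walk_mem_aux hA hB p hzA
  intro a ha b hb hadj
  exact hA.2.2.2 a ha b (fun h => hdisj b h hb)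
    (fun hS => (hB.2.1).ne_of_mem hb hS rfl) hadj

set_option maxHeartbeats 1000000 in
lemma p7_from_path (G : SimpleGraph V) (h7 : PFree 7 G)
    (v0 v1 v2 v3 v4 v5 v6 : V)
    (a01 : G.Adj v0 v1) (a12 : G.Adj v1 v2) (a23 : G.Adj v2 v3)
    (a34 : G.Adj v3 v4) (a45 : G.Adj v4 v5) (a56 : G.Adj v5 v6)
    (n02 : ¬ G.Adj v0 v2) (n03 : ¬ G.Adj v0 v3) (n04 : ¬ G.Adj v0 v4)
    (n05 : ¬ G.Adj v0 v5) (n06 : ¬ G.Adj v0 v6)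
    (n13 : ¬ G.Adj v1 v3) (n14 : ¬ G.Adj v1 v4) (n15 : ¬ G.Adj v1 v5)
    (n16 : ¬ G.Adj v1 v6)
    (n24 : ¬ G.Adj v2 v4) (n25 : ¬ G.Adj v2 v5) (n26 : ¬ G.Adj v2 v6)
    (n35 : ¬ G.Adj v3 v5) (n36 : ¬ G.Adj v3 v6)
    (n46 : ¬ G.Adj v4 v6) : False := by
  have d01 := a01.ne; have d12 := a12.ne; have d23 := a23.ne
  have d34 := a34.ne; have d45 := a45.ne; have d56 := a56.ne
  have d02 : v0 ≠ v2 := fun h => n03 (h ▸ a23)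
  have d03 : v0 ≠ v3 := fun h => n04 (h ▸ a34)
  have d04 : v0 ≠ v4 := fun h => n05 (h ▸ a45)
  have d05 : v0 ≠ v5 := fun h => n06 (h ▸ a56)
  have d06 : v0 ≠ v6 := fun h => n05 (h ▸ a56.symm)
  have d13 : v1 ≠ v3 := fun h => n14 (h ▸ a34)
  have d14 : v1 ≠ v4 := fun h => n15 (h ▸ a45)
  have d15 : v1 ≠ v5 := fun h => n16 (h ▸ a56)
  have d16 : v1 ≠ v6 := fun h => n15 (h ▸ a56.symm)
  have d24 : v2 ≠ v4 := fun h => n25 (h ▸ a45)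
  have d25 : v2 ≠ v5 := fun h => n26 (h ▸ a56)
  have d26 : v2 ≠ v6 := fun h => n25 (h ▸ a56.symm)
  have d35 : v3 ≠ v5 := fun h => n36 (h ▸ a56)
  have d36 : v3 ≠ v6 := fun h => n35 (h ▸ a56.symm)
  have d46 : v4 ≠ v6 := fun h => n36 (h ▸ a34)
  have a10 := a01.symm; have a21 := a12.symm; have a32 := a23.symm
  have a43 := a34.symm; have a54 := a45.symm; have a65 := a56.symm
  have n20 : ¬ G.Adj v2 v0 := fun h => n02 h.symm
  have n30 : ¬ G.Adj v3 v0 := fun h => n03 h.symm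
  have n40 : ¬ G.Adj v4 v0 := fun h => n04 h.symm
  have n50 : ¬ G.Adj v5 v0 := fun h => n05 h.symm
  have n60 : ¬ G.Adj v6 v0 := fun h => n06 h.symm
  have n31 : ¬ G.Adj v3 v1 := fun h => n13 h.symm
  have n41 : ¬ G.Adj v4 v1 := fun h => n14 h.symm
  have n51 : ¬ G.Adj v5 v1 := fun h => n15 h.symm
  have n61 : ¬ G.Adj v6 v1 := fun h => n16 h.symm
  have n42 : ¬ G.Adj v4 v2 := fun h => n24 h.symm
  have n52 : ¬ G.Adj v5 v2 := fun h => n25 h.symm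
  have n62 : ¬ G.Adj v6 v2 := fun h => n26 h.symm
  have n53 : ¬ G.Adj v5 v3 := fun h => n35 h.symm
  have n63 : ¬ G.Adj v6 v3 := fun h => n36 h.symm
  have n64 : ¬ G.Adj v6 v4 := fun h => n46 h.symm
  have n00 : ¬ G.Adj v0 v0 := G.irrefl
  have n11 : ¬ G.Adj v1 v1 := G.irrefl
  have n22 : ¬ G.Adj v2 v2 := G.irrefl
  have n33 : ¬ G.Adj v3 v3 := G.irrefl
  have n44 : ¬ G.Adj v4 v4 := G.irrefl
  have n55 : ¬ G.Adj v5 v5 := G.irrefl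
  have n66 : ¬ G.Adj v6 v6 := G.irrefl
  have e0 : (![v0,v1,v2,v3,v4,v5,v6] : Fin 7 → V) 0 = v0 := rfl
  have e1 : (![v0,v1,v2,v3,v4,v5,v6] : Fin 7 → V) 1 = v1 := rfl
  have e2 : (![v0,v1,v2,v3,v4,v5,v6] : Fin 7 → V) 2 = v2 := rfl
  have e3 : (![v0,v1,v2,v3,v4,v5,v6] : Fin 7 → V) 3 = v3 := rfl
  have e4 : (![v0,v1,v2,v3,v4,v5,v6] : Fin 7 → V) 4 = v4 := rfl
  have e5 : (![v0,v1,v2,v3,v4,v5,v6] : Fin 7 → V) 5 = v5 := rfl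
  have e6 : (![v0,v1,v2,v3,v4,v5,v6] : Fin 7 → V) 6 = v6 := rfl
  apply h7
  refine ⟨⟨![v0, v1, v2, v3, v4, v5, v6], ?_⟩, ?_⟩
  · intro a b
    fin_cases a <;> fin_cases b <;>
      simp only [e0, e1, e2, e3, e4, e5, e6] <;>
      intro hab <;>
      first
        | trivial
        | (exfalso; revert hab;
           first
             | exact d01 | exact d02 | exact d03 | exact d04 | exact d05 | exact d06
             | exact d12 | exact d13 | exact d14 | exact d15 | exact d16
             | exact d23 | exact d24 | exact d25 | exact d26
             | exact d34 | exact d35 | exact d36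
             | exact d45 | exact d46 | exact d56
             | exact fun h => d01 h.symm | exact fun h => d02 h.symm
             | exact fun h => d03 h.symm | exact fun h => d04 h.symm
             | exact fun h => d05 h.symm | exact fun h => d06 h.symm
             | exact fun h => d12 h.symm | exact fun h => d13 h.symm
             | exact fun h => d14 h.symm | exact fun h => d15 h.symm
             | exact fun h => d16 h.symm | exact fun h => d23 h.symm
             | exact fun h => d24 h.symm | exact fun h => d25 h.symm
             | exact fun h => d26 h.symm | exact fun h => d34 h.symm
             | exact fun h => d35 h.symm | exact fun h => d36 h.symm
             | exact fun h => d45 h.symm | exact fun h => d46 h.symm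
             | exact fun h => d56 h.symm)
  · intro i j
    fin_cases i <;> fin_cases j <;>
      simp only [Function.Embedding.coeFn_mk, e0, e1, e2, e3, e4, e5, e6] <;>
      norm_num <;>
      first
        | exact a01 | exact a12 | exact a23 | exact a34 | exact a45 | exact a56
        | exact a10 | exact a21 | exact a32 | exact a43 | exact a54 | exact a65
        | exact n00 | exact n11 | exact n22 | exact n33 | exact n44 | exact n55 | exact n66
        | exact n02 | exact n03 | exact n04 | exact n05 | exact n06
        | exact n13 | exact n14 | exact n15 | exact n16
        | exact n24 | exact n25 | exact n26 | exact n35 | exact n36 | exact n46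
        | exact n20 | exact n30 | exact n40 | exact n50 | exact n60
        | exact n31 | exact n41 | exact n51 | exact n61
        | exact n42 | exact n52 | exact n62 | exact n53 | exact n63 | exact n64

/-- Claim 6 (`cl:motylek`) configuration: in a `P₇`-free graph no such butterfly
configuration exists (it would yield an induced `P₇`). -/
theorem stmt_17 [Fintype V] (G : SimpleGraph V) (h7 : PFree 7 G)
    (S A1 A2 : Set V) (hA12 : A1 ≠ A2)
    (hA1 : IsFullComp G S A1) (hA2 : IsFullComp G S A2)
    (x y x' y' : V) (hxS : x ∈ S) (hyS : y ∈ S) (hx'S : x' ∈ S) (hy'S : y' ∈ S)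
    (u1x u1y u2x u2y w p2 : V)
    (hu1xA : u1x ∈ A1) (hu1x_x : G.Adj x u1x) (hu1x_y : ¬ G.Adj y u1x)
    (hu1yA : u1y ∈ A1) (hu1y_y : G.Adj y u1y) (hu1y_x : ¬ G.Adj x u1y)
    (hu1 : G.Adj u1x u1y)
    (hu2xA : u2x ∈ A2) (hu2x_x : G.Adj x u2x) (hu2x_y : ¬ G.Adj y u2x)
    (hu2yA : u2y ∈ A2) (hu2y_y : G.Adj y u2y) (hu2y_x : ¬ G.Adj x u2y)
    (hu2 : G.Adj u2x u2y)
    (hwA : w ∈ A1) (hwx' : G.Adj w x') (hwu1x : G.Adj w u1x) (hwu1y : G.Adj w u1y)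
    (hwx : ¬ G.Adj w x) (hwy : ¬ G.Adj w y)
    (hx'x : ¬ G.Adj x' x) (hx'y : ¬ G.Adj x' y)
    (hx'u1x : ¬ G.Adj x' u1x) (hx'u1y : ¬ G.Adj x' u1y)
    (hx'u2x : ¬ G.Adj x' u2x) (hx'u2y : ¬ G.Adj x' u2y)
    (hp2A : p2 ∈ A2) (hp2u2y : G.Adj p2 u2y)
    (hp2x : ¬ G.Adj p2 x) (hp2y : ¬ G.Adj p2 y) (hp2u2x : ¬ G.Adj p2 u2x) :
    False := by
  have hanti : ∀ a ∈ A1, ∀ b ∈ A2, ¬ G.Adj a b :=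
    comp_anticomplete_aux hA12 hA1.1 hA2.1
  by_cases hxy : G.Adj x y
  · by_cases hx'p2 : G.Adj x' p2
    · -- path u1y, w, x', p2, u2y, u2x, x
      exact p7_from_path G h7 u1y w x' p2 u2y u2x x
        hwu1y.symm hwx' hx'p2 hp2u2y hu2.symm hu2x_x.symm
        (fun h => hx'u1y h.symm)
        (hanti u1y hu1yA p2 hp2A)
        (hanti u1y hu1yA u2y hu2yA)
        (hanti u1y hu1yA u2x hu2xA)
        (fun h => hu1y_x h.symm)
        (hanti w hwA p2 hp2A)
        (hanti w hwA u2y hu2yA)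
        (hanti w hwA u2x hu2xA)
        hwx
        hx'u2y hx'u2x hx'x
        hp2u2x hp2x
        (fun h => hu2y_x h.symm)
    · -- path x', w, u1x, x, y, u2y, p2
      exact p7_from_path G h7 x' w u1x x y u2y p2
        hwx'.symm hwu1x hu1x_x.symm hxy hu2y_y hp2u2y.symm
        hx'u1x hx'x hx'y hx'u2y hx'p2
        hwx hwy
        (hanti w hwA u2y hu2yA)
        (hanti w hwA p2 hp2A)
        (fun h => hu1x_y h.symm)
        (hanti u1x hu1xA u2y hu2yA)
        (hanti u1x hu1xA p2 hp2A)
        hu2y_x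
        (fun h => hp2x h.symm)
        (fun h => hp2y h.symm)
  · -- path x', w, u1x, x, u2x, u2y, y
    exact p7_from_path G h7 x' w u1x x u2x u2y y
      hwx'.symm hwu1x hu1x_x.symm hu2x_x hu2 hu2y_y.symm
      hx'u1x hx'x hx'u2x hx'u2y hx'y
      hwx
      (hanti w hwA u2x hu2xA)
      (hanti w hwA u2y hu2yA)
      hwy
      (hanti u1x hu1xA u2x hu2xA)
      (hanti u1x hu1xA u2y hu2yA)
      (fun h => hu1x_y h.symm)
      hu2y_x hxy
      (fun h => hu2x_y h.symm)
end

section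
/- Let G be a graph, Ω ⊆ V(G) a potential maximal clique, u, v ∈ Ω nonadjacent, x ∈ Ω, and let D_u, D_{xu}, D_{xv}, D_v be connected components of G−Ω such that: u ∈ N(D_u), v ∉ N(D_u); u, x ∈ N(D_{xu}), v ∉ N(D_{xu}); v, x ∈ N(D_{xv}), u ∉ N(D_{xv}); v ∈ N(D_v), u ∉ N(D_v); and x ∉ N(D_u) ∪ N(D_v), xu ∉ E(G), xv ∉ E(G), and D_u, D_{xu}, D_{xv}, D_v are pairwise distinct. Then G contains an induced path on at least 7 vertices. -/
open SimpleGraph Set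

variable {V : Type*}

/-- Auxiliary: an induced path presented as a function on `{0, …, n}`. -/
def GoodSeq (G : SimpleGraph V) (n : ℕ) (g : ℕ → V) : Prop :=
  ∀ i, i ≤ n → ∀ j, j ≤ n →
    (G.Adj (g i) (g j) ↔ i + 1 = j ∨ j + 1 = i) ∧ (g i = g j → i = j)

lemma goodSeq_symmCase {G : SimpleGraph V} {x y : V} {i j : ℕ}
    (h : (G.Adj y x ↔ j + 1 = i ∨ i + 1 = j) ∧ (y = x → j = i)) :
    (G.Adj x y ↔ i + 1 = j ∨ j + 1 = i) ∧ (x = y → i = j) := by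
  constructor
  · rw [adj_comm]
    exact h.1.trans (by tauto)
  · intro e; exact (h.2 e.symm).symm

lemma goodSeq_pair {G : SimpleGraph V} {a b : V} (hab : G.Adj a b) :
    GoodSeq G 1 (fun i => if i = 0 then a else b) := by
  have e0 : (fun i : ℕ => if i = 0 then a else b) 0 = a := rfl
  have e1 : (fun i : ℕ => if i = 0 then a else b) 1 = b := rfl
  intro i hi j hj
  interval_cases i <;> interval_cases j
  · rw [e0]; exact ⟨by simp, fun _ => rfl⟩
  · rw [e0, e1]; exact ⟨by simp [hab], fun e => absurd e hab.ne⟩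
  · rw [e0, e1]; exact ⟨by simp [hab.symm], fun e => absurd e.symm hab.ne⟩
  · rw [e1]; exact ⟨by simp, fun _ => rfl⟩

lemma goodSeq_glue {G : SimpleGraph V} {n1 n2 : ℕ} {g1 g2 : ℕ → V}
    (h1 : GoodSeq G n1 g1) (h2 : GoodSeq G n2 g2) (heq : g1 n1 = g2 0)
    (hcross : ∀ i, i < n1 → ∀ j, 1 ≤ j → j ≤ n2 →
      ¬ G.Adj (g1 i) (g2 j) ∧ g1 i ≠ g2 j) :
    GoodSeq G (n1 + n2) (fun i => if i ≤ n1 then g1 i else g2 (i - n1)) := by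
  set f : ℕ → V := fun i => if i ≤ n1 then g1 i else g2 (i - n1) with hf
  have hfle : ∀ t, t ≤ n1 → f t = g1 t := fun t ht => if_pos ht
  have hfgt : ∀ t, n1 < t → f t = g2 (t - n1) := fun t ht => if_neg (not_le.mpr ht)
  suffices H : ∀ i, i ≤ n1 + n2 → ∀ j, j ≤ n1 + n2 → i ≤ j →
      (G.Adj (f i) (f j) ↔ i + 1 = j ∨ j + 1 = i) ∧ (f i = f j → i = j) by
    intro i hi j hj
    rcases le_total i j with h' | h'
    · exact H i hi j hj h'
    · exact goodSeq_symmCase (H j hj i hi h')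
  intro i hi j hj hij
  by_cases hj1 : j ≤ n1
  · have hi1 : i ≤ n1 := le_trans hij hj1
    rw [hfle i hi1, hfle j hj1]
    exact h1 i hi1 j hj1
  · push_neg at hj1
    rw [hfgt j hj1]
    by_cases hi1 : i ≤ n1
    · rw [hfle i hi1]
      rcases eq_or_lt_of_le hi1 with rfl | hlt
      · rw [heq]
        obtain ⟨ha, hb⟩ := h2 0 (by omega) (j - i) (by omega)
        exact ⟨ha.trans (by omega), fun e => by have := hb e; omega⟩
      · obtain ⟨hna, hnee⟩ := hcross i hlt (j - n1) (by omega) (by omega)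
        refine ⟨⟨fun ha => absurd ha hna, fun hc => by omega⟩, fun e => absurd e hnee⟩
    · push_neg at hi1
      rw [hfgt i hi1]
      obtain ⟨ha, hb⟩ := h2 (i - n1) (by omega) (j - n1) (by omega)
      exact ⟨ha.trans (by omega), fun e => by have := hb e; omega⟩

lemma goodSeq_emb {G : SimpleGraph V} {n : ℕ} {g : ℕ → V} (h : GoodSeq G n g) :
    ∃ f : Fin (n + 1) ↪ V, IsInducedPathMap G f := by
  refine ⟨⟨fun i => g i, fun i j e => ?_⟩, fun i j => ?_⟩
  · exact Fin.ext ((h i (Nat.lt_succ_iff.mp i.isLt) j (Nat.lt_succ_iff.mp j.isLt)).2 e)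
  · exact (h i (Nat.lt_succ_iff.mp i.isLt) j (Nat.lt_succ_iff.mp j.isLt)).1

/-- A shortest walk gives an induced path. -/
lemma shortest_goodSeq {W : Type*} (H : SimpleGraph W) {s t : W} (hr : H.Reachable s t) :
    ∃ (n : ℕ) (g : ℕ → W), g 0 = s ∧ g n = t ∧
      ∀ i, i ≤ n → ∀ j, j ≤ n →
        (H.Adj (g i) (g j) ↔ i + 1 = j ∨ j + 1 = i) ∧ (g i = g j → i = j) := by
  obtain ⟨w, hw⟩ := hr.exists_walk_length_eq_dist
  set n := w.length with hn
  have hwalk : ∀ d i j, i + d = j → j ≤ n →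
      ∃ q : H.Walk (w.getVert i) (w.getVert j), q.length = d := by
    intro d
    induction d with
    | zero =>
      intro i j hij _
      obtain rfl : i = j := by omega
      exact ⟨Walk.nil, rfl⟩
    | succ d ih =>
      intro i j hij hjn
      obtain ⟨q, hq⟩ := ih i (i + d) rfl (by omega)
      have hadj := w.adj_getVert_succ (i := i + d) (by omega)
      have hj' : i + d + 1 = j := by omega
      subst hj'
      exact ⟨q.concat hadj, by rw [Walk.length_concat, hq]⟩
  refine ⟨n, w.getVert, w.getVert_zero, w.getVert_length, ?_⟩
  have hlow : ∀ i j, i ≤ j → j ≤ n → H.Adj (w.getVert i) (w.getVert j) → j ≤ i + 1 := by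
    intro i j hij hjn hadj
    by_contra hc
    push_neg at hc
    obtain ⟨w1, hw1⟩ := hwalk i 0 i (by omega) (by omega)
    obtain ⟨w2, hw2⟩ := hwalk (n - j) j n (by omega) le_rfl
    have hd := SimpleGraph.dist_le (w1.append (Walk.cons hadj w2))
    rw [Walk.length_append, Walk.length_cons, hw1, hw2] at hd
    rw [w.getVert_zero, w.getVert_length] at hd
    omega
  have hinj : ∀ i j, i ≤ j → j ≤ n → w.getVert i = w.getVert j → i = j := by
    intro i j hij hjn he
    by_contra hc
    obtain ⟨w1, hw1⟩ := hwalk i 0 i (by omega) (by omega)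
    obtain ⟨w2, hw2⟩ := hwalk (n - j) j n (by omega) le_rfl
    have hd := SimpleGraph.dist_le (w1.append (w2.copy he.symm rfl))
    rw [Walk.length_append, Walk.length_copy, hw1, hw2] at hd
    rw [w.getVert_zero, w.getVert_length] at hd
    omega
  intro i hi j hj
  constructor
  · constructor
    · intro hadj
      have hne : i ≠ j := by
        intro e; subst e; exact H.irrefl hadj
      rcases le_total i j with h' | h'
      · have := hlow i j h' hj hadj; omega
      · have := hlow j i h' hi hadj.symm; omega
    · rintro (h' | h')
      · exact h' ▸ w.adj_getVert_succ (by omega)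
      · exact (h' ▸ w.adj_getVert_succ (i := j) (by omega)).symm
  · intro he
    rcases le_total i j with h' | h'
    · exact hinj i j h' hj he
    · exact (hinj j i h' hi he.symm).symm

variable {G : SimpleGraph V} {Ω : Set V}

lemma walk_mem_comp {A B : Set V} (hB : IsCompOutside G Ω B) (hAΩ : Disjoint A Ω) :
    ∀ {c d : ↥A}, (G.induce A).Walk c d → (c : V) ∈ B → (d : V) ∈ B := by
  intro c d w
  induction w with
  | nil => exact id
  | @cons c e d hadj w ih =>
    intro hc
    apply ih
    by_contra he
    exact hB.2.2.2 _ hc _ he (Set.disjoint_left.mp hAΩ e.2) hadj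

lemma comp_subset {A B : Set V} (hA : IsCompOutside G Ω A) (hB : IsCompOutside G Ω B)
    {w : V} (hwA : w ∈ A) (hwB : w ∈ B) : A ⊆ B := by
  intro a ha
  obtain ⟨wk⟩ := hA.2.2.1.preconnected ⟨w, hwA⟩ ⟨a, ha⟩
  exact walk_mem_comp hB hA.2.1 wk hwB

lemma comp_disj {A B : Set V} (hA : IsCompOutside G Ω A) (hB : IsCompOutside G Ω B)
    (hne : A ≠ B) : ∀ a ∈ A, a ∉ B :=
  fun a ha hb => hne ((comp_subset hA hB ha hb).antisymm (comp_subset hB hA hb ha))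

lemma cross_nonadj {A B : Set V} (hA : IsCompOutside G Ω A) (hB : IsCompOutside G Ω B)
    (hne : A ≠ B) {a b : V} (ha : a ∈ A) (hb : b ∈ B) : ¬ G.Adj a b :=
  hA.2.2.2 a ha b (comp_disj hB hA (Ne.symm hne) b hb) (Set.disjoint_left.mp hB.2.1 hb)

lemma nbhd_not {D : Set V} {y : V} (h : y ∉ nbhdSet G D) (hy : y ∉ D) :
    ∀ d ∈ D, ¬ G.Adj d y :=
  fun d hd hadj => h ⟨hy, d, hd, hadj⟩

/-- An induced path through a component joining two vertices of its neighborhood. -/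
lemma exists_path_through {D : Set V} (hD : IsCompOutside G Ω D)
    {s1 s2 : V} (h1 : s1 ∈ nbhdSet G D) (h2 : s2 ∈ nbhdSet G D)
    (hne : s1 ≠ s2) (hnadj : ¬ G.Adj s1 s2) :
    ∃ m, 2 ≤ m ∧ ∃ p : ℕ → V, p 0 = s1 ∧ p m = s2 ∧
      (∀ i, 0 < i → i < m → p i ∈ D) ∧ GoodSeq G m p := by
  obtain ⟨hs1D, d1, hd1, hadj1⟩ := h1
  obtain ⟨hs2D, d2, hd2, hadj2⟩ := h2
  set T : Set V := D ∪ {s1, s2} with hT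
  have hs1T : s1 ∈ T := Or.inr (Or.inl rfl)
  have hs2T : s2 ∈ T := Or.inr (Or.inr rfl)
  have hsub : D ⊆ T := Set.subset_union_left
  have hreach : (G.induce T).Reachable ⟨s1, hs1T⟩ ⟨s2, hs2T⟩ := by
    have r1 : (G.induce T).Reachable ⟨s1, hs1T⟩ ⟨d1, hsub hd1⟩ :=
      SimpleGraph.Adj.reachable (by exact hadj1.symm)
    have r2 : (G.induce T).Reachable ⟨d1, hsub hd1⟩ ⟨d2, hsub hd2⟩ :=
      Reachable.map (SimpleGraph.induceHomOfLE G hsub).toHom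
        (hD.2.2.1.preconnected ⟨d1, hd1⟩ ⟨d2, hd2⟩)
    have r3 : (G.induce T).Reachable ⟨d2, hsub hd2⟩ ⟨s2, hs2T⟩ :=
      SimpleGraph.Adj.reachable (by exact hadj2)
    exact r1.trans (r2.trans r3)
  obtain ⟨n, g, hg0, hgn, hspec⟩ := shortest_goodSeq _ hreach
  have hspec' : GoodSeq G n (fun i => (g i : V)) := by
    intro i hi j hj
    obtain ⟨ha, hb⟩ := hspec i hi j hj
    exact ⟨by exact ha, fun e => hb (Subtype.ext e)⟩
  have hp0 : (g 0 : V) = s1 := by rw [hg0]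
  have hpn : (g n : V) = s2 := by rw [hgn]
  have hn2 : 2 ≤ n := by
    by_contra hc
    push_neg at hc
    interval_cases n
    · exact hne (hp0.symm.trans hpn)
    · exact hnadj (by
        have h' := (hspec' 0 (by omega) 1 (by omega)).1.mpr (Or.inl rfl)
        simpa [hp0, hpn] using h')
  refine ⟨n, hn2, fun i => (g i : V), hp0, hpn, ?_, hspec'⟩
  intro i h0 hm
  rcases (g i).2 with hmem | hmem
  · exact hmem
  · exfalso
    simp only [Set.mem_insert_iff, Set.mem_singleton_iff] at hmem
    rcases hmem with he | he
    · have h' : (g i : V) = (g 0 : V) := by rw [hp0]; exact he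
      have := (hspec' i (by omega) 0 (by omega)).2 (by simpa using h')
      omega
    · have h' : (g i : V) = (g n : V) := by rw [hpn]; exact he
      have := (hspec' i (by omega) n (by omega)).2 (by simpa using h')
      omega

/-- The configuration in the proof of Lemma 7 (`lem:pmccov2`) yields an induced path
on at least 7 vertices. -/
theorem stmt_18 [Fintype V] (G : SimpleGraph V) (Ω : Set V) (hΩ : IsPMC G Ω)
    (u v x : V) (huΩ : u ∈ Ω) (hvΩ : v ∈ Ω) (hxΩ : x ∈ Ω)
    (huv_ne : u ≠ v) (huv : ¬ G.Adj u v) (hxu : ¬ G.Adj x u) (hxv : ¬ G.Adj x v)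
    (Du Dxu Dxv Dv : Set V)
    (hDu : IsCompOutside G Ω Du) (hDxu : IsCompOutside G Ω Dxu)
    (hDxv : IsCompOutside G Ω Dxv) (hDv : IsCompOutside G Ω Dv)
    (hne1 : Du ≠ Dxu) (hne2 : Du ≠ Dxv) (hne3 : Du ≠ Dv)
    (hne4 : Dxu ≠ Dxv) (hne5 : Dxu ≠ Dv) (hne6 : Dxv ≠ Dv)
    (hu_Du : u ∈ nbhdSet G Du) (hv_Du : v ∉ nbhdSet G Du)
    (hu_Dxu : u ∈ nbhdSet G Dxu) (hx_Dxu : x ∈ nbhdSet G Dxu) (hv_Dxu : v ∉ nbhdSet G Dxu)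
    (hv_Dxv : v ∈ nbhdSet G Dxv) (hx_Dxv : x ∈ nbhdSet G Dxv) (hu_Dxv : u ∉ nbhdSet G Dxv)
    (hv_Dv : v ∈ nbhdSet G Dv) (hu_Dv : u ∉ nbhdSet G Dv)
    (hx_Du : x ∉ nbhdSet G Du) (hx_Dv : x ∉ nbhdSet G Dv) :
    ∃ k : ℕ, 7 ≤ k ∧ ∃ f : Fin k ↪ V, IsInducedPathMap G f := by
  -- basic membership facts
  have nDu : ∀ {z : V}, z ∈ Ω → z ∉ Du := fun hz => Set.disjoint_right.mp hDu.2.1 hz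
  have nDxu : ∀ {z : V}, z ∈ Ω → z ∉ Dxu := fun hz => Set.disjoint_right.mp hDxu.2.1 hz
  have nDxv : ∀ {z : V}, z ∈ Ω → z ∉ Dxv := fun hz => Set.disjoint_right.mp hDxv.2.1 hz
  have nDv : ∀ {z : V}, z ∈ Ω → z ∉ Dv := fun hz => Set.disjoint_right.mp hDv.2.1 hz
  obtain ⟨hu_notDu, a, haDu, hau⟩ := hu_Du
  obtain ⟨hv_notDv, b, hbDv, hbv⟩ := hv_Dv
  have hu_Du' : u ∈ nbhdSet G Du := ⟨hu_notDu, a, haDu, hau⟩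
  have hv_Dv' : v ∈ nbhdSet G Dv := ⟨hv_notDv, b, hbDv, hbv⟩
  have hxu_ne : x ≠ u := fun e => hx_Du (e ▸ hu_Du')
  have hxv_ne : x ≠ v := fun e => hx_Dv (e ▸ hv_Dv')
  -- induced paths through Dxu and Dxv
  obtain ⟨m, hm2, p, hp0, hpm, hpD, hpG⟩ :=
    exists_path_through hDxu hu_Dxu hx_Dxu hxu_ne.symm (fun h => hxu h.symm)
  obtain ⟨l, hl2, q, hq0, hql, hqD, hqG⟩ :=
    exists_path_through hDxv hx_Dxv hv_Dxv hxv_ne hxv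
  -- the pieces
  set p0 : ℕ → V := fun i => if i = 0 then a else u with hp0def
  have good0 : GoodSeq G 1 p0 := goodSeq_pair hau
  have ep00 : p0 0 = a := by simp [hp0def]
  have ep01 : p0 1 = u := by simp [hp0def]
  set f1 : ℕ → V := fun i => if i ≤ 1 then p0 i else p (i - 1) with hf1def
  have ef1 : ∀ i, i ≤ 1 → f1 i = p0 i := fun i h => by
    simp only [hf1def]; exact if_pos h
  have ef1' : ∀ i, 1 < i → f1 i = p (i - 1) := fun i h => by
    simp only [hf1def]; exact if_neg (by omega)
  -- glue a-u with p
  have good_f1 : GoodSeq G (1 + m) f1 := by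
    refine goodSeq_glue good0 hpG (by rw [ep01, hp0]) ?_
    intro i hi j hj1 hj2
    obtain rfl : i = 0 := by omega
    rw [ep00]
    rcases eq_or_lt_of_le hj2 with rfl | hlt
    · rw [hpm]
      exact ⟨nbhd_not hx_Du (nDu hxΩ) a haDu, fun e => (nDu hxΩ) (e ▸ haDu)⟩
    · have hmem := hpD j (by omega) hlt
      exact ⟨cross_nonadj hDu hDxu hne1 haDu hmem,
        fun e => comp_disj hDxu hDu hne1.symm _ hmem (e ▸ haDu)⟩
  set f2 : ℕ → V := fun i => if i ≤ 1 + m then f1 i else q (i - (1 + m)) with hf2def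
  have ef2 : ∀ i, i ≤ 1 + m → f2 i = f1 i := fun i h => by
    simp only [hf2def]; exact if_pos h
  have ef2' : ∀ i, 1 + m < i → f2 i = q (i - (1 + m)) := fun i h => by
    simp only [hf2def]; exact if_neg (by omega)
  -- glue with q
  have good_f2 : GoodSeq G (1 + m + l) f2 := by
    refine goodSeq_glue good_f1 hqG ?_ ?_
    · rw [ef1' (1 + m) (by omega)]
      have h' : 1 + m - 1 = m := by omega
      rw [h', hpm, hq0]
    · intro i hi j hj1 hj2
      have hqmem : q j ∈ Dxv ∨ q j = v := by
        rcases eq_or_lt_of_le hj2 with rfl | hlt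
        · exact Or.inr hql
        · exact Or.inl (hqD j (by omega) hlt)
      by_cases hi0 : i = 0
      · subst hi0
        rw [ef1 0 (by omega), ep00]
        rcases hqmem with hm' | he
        · exact ⟨cross_nonadj hDu hDxv hne2 haDu hm',
            fun e => comp_disj hDxv hDu hne2.symm _ hm' (e ▸ haDu)⟩
        · rw [he]
          exact ⟨nbhd_not hv_Du (nDu hvΩ) a haDu, fun e => (nDu hvΩ) (e ▸ haDu)⟩
      · by_cases hi1 : i = 1
        · subst hi1
          rw [ef1 1 (by omega), ep01]
          rcases hqmem with hm' | he
          · exact ⟨fun h => nbhd_not hu_Dxv (nDxv huΩ) (q j) hm' h.symm,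
              fun e => (nDxv huΩ) (by rw [e]; exact hm')⟩
          · rw [he]
            exact ⟨huv, huv_ne⟩
        · rw [ef1' i (by omega)]
          have hpmem : p (i - 1) ∈ Dxu := hpD (i - 1) (by omega) (by omega)
          rcases hqmem with hm' | he
          · exact ⟨cross_nonadj hDxu hDxv hne4 hpmem hm',
              fun e => comp_disj hDxv hDxu hne4.symm _ hm' (e ▸ hpmem)⟩
          · rw [he]
            exact ⟨fun h => nbhd_not hv_Dxu (nDxu hvΩ) _ hpmem h,
              fun e => (nDxu hvΩ) (e ▸ hpmem)⟩
  set pv : ℕ → V := fun i => if i = 0 then v else b with hpvdef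
  have goodvb : GoodSeq G 1 pv := goodSeq_pair hbv.symm
  have epv0 : pv 0 = v := by simp [hpvdef]
  have epv1 : pv 1 = b := by simp [hpvdef]
  -- glue with v-b
  have good_f3 : GoodSeq G (1 + m + l + 1)
      (fun i => if i ≤ 1 + m + l then f2 i else pv (i - (1 + m + l))) := by
    refine goodSeq_glue good_f2 goodvb ?_ ?_
    · rw [ef2' (1 + m + l) (by omega)]
      have h' : 1 + m + l - (1 + m) = l := by omega
      rw [h', hql, epv0]
    · intro i hi j hj1 hj2
      obtain rfl : j = 1 := by omega
      rw [epv1]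
      by_cases him : i ≤ 1 + m
      · rw [ef2 i him]
        by_cases hi0 : i = 0
        · subst hi0
          rw [ef1 0 (by omega), ep00]
          exact ⟨cross_nonadj hDu hDv hne3 haDu hbDv,
            fun e => comp_disj hDv hDu hne3.symm _ hbDv (e ▸ haDu)⟩
        · by_cases hi1 : i = 1
          · subst hi1
            rw [ef1 1 (by omega), ep01]
            exact ⟨fun h => nbhd_not hu_Dv (nDv huΩ) b hbDv h.symm,
              fun e => (nDv huΩ) (by rw [e]; exact hbDv)⟩
          · rw [ef1' i (by omega)]
            by_cases hix : i = 1 + m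
            · subst hix
              have h' : 1 + m - 1 = m := by omega
              rw [h', hpm]
              exact ⟨fun h => nbhd_not hx_Dv (nDv hxΩ) b hbDv h.symm,
                fun e => (nDv hxΩ) (by rw [e]; exact hbDv)⟩
            · have hpmem : p (i - 1) ∈ Dxu := hpD (i - 1) (by omega) (by omega)
              exact ⟨cross_nonadj hDxu hDv hne5 hpmem hbDv,
                fun e => comp_disj hDv hDxu hne5.symm _ hbDv (e ▸ hpmem)⟩
      · push_neg at him
        rw [ef2' i him]
        have hqmem : q (i - (1 + m)) ∈ Dxv := hqD (i - (1 + m)) (by omega) (by omega)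
        exact ⟨cross_nonadj hDxv hDv hne6 hqmem hbDv,
          fun e => comp_disj hDv hDxv hne6.symm _ hbDv (e ▸ hqmem)⟩
  exact ⟨1 + m + l + 1 + 1, by omega, goodSeq_emb good_f3⟩
end
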